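/- arXiv:2310.20021 — 5 statements merged into one kernel-verified Lean document; each statement's English description precedes it below -/
import Mathlib

section
/- Let F ∈ ℤ[x,y] be a polynomial of total degree 6 whose degree-6 homogeneous component F₆ is square-free as a binary form over an algebraic closure of ℚ (i.e. F₆ is not divisible by the square of any nonconstant binary form over ℚ̄). Then F is not arithmetically complete. -/
open MvPolynomial

/-- `F ∈ ℤ[x,y]` is arithmetically complete if there exist integers `D₁ > 0` and `D₂`
such that `F(ℤ²) = {D₁ * n + D₂ : n ∈ ℤ, n ≥ 0}`. -/
def ArithmeticallyComplete (F : MvPolynomial (Fin 2) ℤ) : Prop :=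
  ∃ D₁ D₂ : ℤ, 0 < D₁ ∧
    {m : ℤ | ∃ x y : ℤ, eval ![x, y] F = m}
      = {m : ℤ | ∃ n : ℤ, 0 ≤ n ∧ m = D₁ * n + D₂}

/-- The image of `F ∈ ℤ[x,y]` in `ℚ̄[x,y]`. -/
noncomputable def toQbar (F : MvPolynomial (Fin 2) ℤ) :
    MvPolynomial (Fin 2) (AlgebraicClosure ℚ) :=
  MvPolynomial.map (Int.castRingHom (AlgebraicClosure ℚ)) F

noncomputable section
namespace SLF

open Polynomial

abbrev Qbar := AlgebraicClosure ℚ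

lemma vec_eta {α : Type*} (v : Fin 2 → α) : ![v 0, v 1] = v := by
  funext i; fin_cases i <;> simp

lemma homog_deg_fin2 {R : Type*} [CommRing R] {p : MvPolynomial (Fin 2) R} {n : ℕ}
    (hp : p.IsHomogeneous n) {m : Fin 2 →₀ ℕ} (hm : m ∈ p.support) : m 0 + m 1 = n := by
  have h1 : (Finsupp.weight 1) m = n := hp (MvPolynomial.mem_support_iff.mp hm)
  rw [show (Finsupp.weight 1 : (Fin 2 →₀ ℕ) →+ ℕ) = Finsupp.weight (fun _ => 1) from rfl,
    ← Finsupp.degree_eq_weight_one, Finsupp.degree_apply] at h1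
  rw [← h1]
  rw [Finset.sum_subset (Finset.subset_univ m.support)]
  · exact (Fin.sum_univ_two m).symm
  · intro x _ hx
    simpa using (Finsupp.notMem_support_iff.mp hx)

lemma eval_homog_smul {R : Type*} [CommRing R] {p : MvPolynomial (Fin 2) R} {n : ℕ}
    (hp : p.IsHomogeneous n) (c : R) (v : Fin 2 → R) :
    MvPolynomial.eval (fun i => c * v i) p = c ^ n * MvPolynomial.eval v p := by
  rw [MvPolynomial.eval_eq', MvPolynomial.eval_eq', Finset.mul_sum]
  apply Finset.sum_congr rfl
  intro m hm
  have hdeg : m 0 + m 1 = n := homog_deg_fin2 hp hm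
  rw [Fin.prod_univ_two, Fin.prod_univ_two, mul_pow, mul_pow, ← hdeg, pow_add]
  ring

/-- dehomogenization chart `x ↦ x, y ↦ 1` -/
def chart {R : Type*} [CommRing R] (G : MvPolynomial (Fin 2) R) : Polynomial R :=
  MvPolynomial.aeval ![Polynomial.X, 1] G

lemma chart_eval {K : Type*} [CommRing K] (G : MvPolynomial (Fin 2) K) (z : K) :
    (chart G).eval z = MvPolynomial.eval ![z, 1] G := by
  induction G using MvPolynomial.induction_on with
  | C a => simp [chart]
  | add p q hp hq =>
      rw [chart, map_add, Polynomial.eval_add, map_add, ← chart, ← chart, hp, hq]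
  | mul_X p i hp =>
      rw [chart, map_mul, Polynomial.eval_mul]
      rw [chart] at hp
      rw [hp, map_mul]
      congr 1
      fin_cases i <;> simp

lemma chart_map {K L : Type*} [CommRing K] [CommRing L] (f : K →+* L)
    (G : MvPolynomial (Fin 2) K) :
    chart (MvPolynomial.map f G) = Polynomial.map f (chart G) := by
  induction G using MvPolynomial.induction_on with
  | C a => simp [chart]
  | add p q hp hq =>
      simp only [chart] at hp hq ⊢
      rw [map_add, map_add, map_add, Polynomial.map_add, hp, hq]
  | mul_X p i hp =>
      simp only [chart] at hp ⊢
      rw [map_mul, map_mul, map_mul, Polynomial.map_mul, hp, MvPolynomial.map_X]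
      congr 1
      fin_cases i <;> simp

lemma natDegree_chart_le {K : Type*} [CommRing K] (G : MvPolynomial (Fin 2) K) :
    (chart G).natDegree ≤ G.totalDegree := by
  rw [chart, MvPolynomial.aeval_def, MvPolynomial.eval₂_eq]
  apply Polynomial.natDegree_sum_le_of_forall_le
  intro m hm
  refine le_trans (Polynomial.natDegree_mul_le) ?_
  have h1 : (Polynomial.natDegree ((algebraMap K K[X]) (MvPolynomial.coeff m G))) = 0 := by
    simp [Polynomial.natDegree_C]
  rw [h1, zero_add]
  have h2 : (∏ i ∈ m.support, (![Polynomial.X, (1:K[X])] i) ^ m i).natDegree ≤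
      ∑ i ∈ m.support, m i := by
    refine le_trans (Polynomial.natDegree_prod_le _ _) ?_
    apply Finset.sum_le_sum
    intro i _
    fin_cases i
    · simpa using le_trans Polynomial.natDegree_pow_le
        (by simpa using Nat.mul_le_mul_left (m 0) Polynomial.natDegree_X_le)
    · simp
  exact le_trans h2 (MvPolynomial.le_totalDegree hm)

lemma eval_int_cast {R : Type*} [CommRing R] (p : MvPolynomial (Fin 2) ℤ) (v : Fin 2 → ℤ) :
    ((MvPolynomial.eval v p : ℤ) : R) =
      MvPolynomial.eval (fun i => ((v i : ℤ) : R)) (MvPolynomial.map (Int.castRingHom R) p) := by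
  rw [MvPolynomial.eval_map]
  have h := MvPolynomial.eval₂_comp_left (Int.castRingHom R) (RingHom.id ℤ) v p
  rw [RingHom.comp_id] at h
  have h2 : MvPolynomial.eval₂ (Int.castRingHom R) (fun i => ((v i : ℤ) : R)) p
      = MvPolynomial.eval₂ (Int.castRingHom R) (⇑(Int.castRingHom R) ∘ v) p := rfl
  rw [h2, ← h]
  rfl

/-- bound on evaluation of a homogeneous integer polynomial -/
lemma abs_eval_le {p : MvPolynomial (Fin 2) ℤ} {n : ℕ} (hp : p.IsHomogeneous n) (a b : ℤ) :
    |MvPolynomial.eval ![a, b] p| ≤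
      (∑ m ∈ p.support, |MvPolynomial.coeff m p|) * (max |a| |b|) ^ n := by
  rw [MvPolynomial.eval_eq', Finset.sum_mul]
  refine le_trans (Finset.abs_sum_le_sum_abs _ _) (Finset.sum_le_sum ?_)
  intro m hm
  rw [abs_mul]
  have hH : (0:ℤ) ≤ max |a| |b| := le_trans (abs_nonneg a) (le_max_left _ _)
  have hprod : |∏ i, (![a, b] : Fin 2 → ℤ) i ^ m i| ≤ (max |a| |b|) ^ n := by
    rw [Fin.prod_univ_two, abs_mul, abs_pow, abs_pow]
    have h0 : (![a,b] : Fin 2 → ℤ) 0 = a := rfl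
    have h1 : (![a,b] : Fin 2 → ℤ) 1 = b := rfl
    rw [h0, h1, ← homog_deg_fin2 hp hm, pow_add]
    exact mul_le_mul (pow_le_pow_left₀ (abs_nonneg a) (le_max_left _ _) _)
      (pow_le_pow_left₀ (abs_nonneg b) (le_max_right _ _) _) (pow_nonneg (abs_nonneg b) _)
      (pow_nonneg hH _)
  calc |MvPolynomial.coeff m p| * |∏ i, (![a, b] : Fin 2 → ℤ) i ^ m i|
      ≤ |MvPolynomial.coeff m p| * (max |a| |b|) ^ n :=
        mul_le_mul_of_nonneg_left hprod (abs_nonneg _)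

section FieldPart

variable {K : Type*} [Field K] [Infinite K]

def hmog (n : ℕ) (q : Polynomial K) : MvPolynomial (Fin 2) K :=
  ∑ i ∈ Finset.range (n+1), MvPolynomial.C (q.coeff i) * MvPolynomial.X 0 ^ i *
    MvPolynomial.X 1 ^ (n - i)

omit [Infinite K] in
lemma hmog_eval_ne {n : ℕ} {q : Polynomial K} (hq : q.natDegree < n + 1) (s t : K)
    (ht : t ≠ 0) :
    MvPolynomial.eval ![s, t] (hmog n q) = t ^ n * q.eval (s / t) := by
  rw [hmog, Polynomial.eval_eq_sum_range' hq]
  rw [map_sum, Finset.mul_sum]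
  apply Finset.sum_congr rfl
  intro i hi
  rw [Finset.mem_range] at hi
  simp only [map_mul, MvPolynomial.eval_C, map_pow, MvPolynomial.eval_X]
  have : (![s, t] : Fin 2 → K) 0 = s := rfl
  have h2 : (![s, t] : Fin 2 → K) 1 = t := rfl
  rw [this, h2, div_pow]
  have hsplit : t ^ n = t ^ (n - i) * t ^ i := by
    rw [← pow_add, Nat.sub_add_cancel (Nat.lt_succ_iff.mp hi)]
  rw [hsplit]
  field_simp

lemma eq_of_eval_ne_zero {A B : MvPolynomial (Fin 2) K}
    (h : ∀ s t : K, t ≠ 0 → MvPolynomial.eval ![s, t] A = MvPolynomial.eval ![s, t] B) :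
    A = B := by
  have key : MvPolynomial.X 1 * A = MvPolynomial.X 1 * B := by
    apply MvPolynomial.funext
    intro v
    rw [MvPolynomial.eval_mul, MvPolynomial.eval_mul, MvPolynomial.eval_X]
    rcases eq_or_ne (v 1) 0 with hv | hv
    · rw [hv, zero_mul, zero_mul]
    · rw [← vec_eta v, h (v 0) (v 1) hv]
  exact mul_left_cancel₀ (MvPolynomial.X_ne_zero 1) key

omit [Infinite K] in
lemma homog_eval_chart {G : MvPolynomial (Fin 2) K} (hG : G.IsHomogeneous 6)
    (s t : K) (ht : t ≠ 0) :
    MvPolynomial.eval ![s, t] G = t ^ 6 * (chart G).eval (s / t) := by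
  rw [chart_eval]
  rw [← eval_homog_smul hG t ![s/t, 1]]
  have hv : (![s, t] : Fin 2 → K) = fun i => t * (![s/t, 1] : Fin 2 → K) i := by
    funext i; fin_cases i <;> simp
    field_simp
  rw [hv]

lemma eq_zero_of_chart_eq_zero {G : MvPolynomial (Fin 2) K}
    (hG : G.IsHomogeneous 6) (h : chart G = 0) : G = 0 := by
  apply eq_of_eval_ne_zero (B := 0)
  intro s t ht
  rw [homog_eval_chart hG s t ht, h]
  simp

lemma core (G : MvPolynomial (Fin 2) K) (hG : G.IsHomogeneous 6) (hne : G ≠ 0)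
    (a : K) (h0 : (chart G).eval a = 0) (h1 : ((chart G).derivative).eval a = 0) :
    ∃ g : MvPolynomial (Fin 2) K, 0 < g.totalDegree ∧ g ^ 2 ∣ G := by
  set P := chart G with hP
  have hPdeg : P.natDegree ≤ 6 := le_trans (natDegree_chart_le G) (hG.totalDegree_le)
  obtain ⟨S, hS⟩ := (Polynomial.dvd_iff_isRoot.mpr h0)
  have hSa : S.eval a = 0 := by
    have hder : P.derivative = S + (Polynomial.X - Polynomial.C a) * S.derivative := by
      rw [hS, Polynomial.derivative_mul, Polynomial.derivative_X_sub_C, one_mul]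
    have := h1
    rw [hder, Polynomial.eval_add, Polynomial.eval_mul, Polynomial.eval_sub,
      Polynomial.eval_X, Polynomial.eval_C, sub_self, zero_mul, add_zero] at this
    exact this
  obtain ⟨R, hR⟩ := (Polynomial.dvd_iff_isRoot.mpr hSa)
  have hPR : P = (Polynomial.X - Polynomial.C a) ^ 2 * R := by rw [hS, hR]; ring
  have hPne : P ≠ 0 := by
    intro h
    exact hne (eq_zero_of_chart_eq_zero hG (hP ▸ h))
  have hRne : R ≠ 0 := by intro h; rw [h, mul_zero] at hPR; exact hPne hPR
  have hRdeg : R.natDegree < 5 := by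
    have hmul := Polynomial.natDegree_mul (pow_ne_zero 2 (Polynomial.X_sub_C_ne_zero a)) hRne
    rw [← hPR] at hmul
    have h2 : ((Polynomial.X - Polynomial.C a) ^ 2).natDegree = 2 := by
      rw [Polynomial.natDegree_pow, Polynomial.natDegree_X_sub_C]
    omega
  refine ⟨MvPolynomial.X 0 - MvPolynomial.C a * MvPolynomial.X 1, ?_, ?_⟩
  · have hc : MvPolynomial.coeff (Finsupp.single 0 1)
        (MvPolynomial.X 0 - MvPolynomial.C a * MvPolynomial.X 1 : MvPolynomial (Fin 2) K) = 1 := by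
      rw [MvPolynomial.coeff_sub, MvPolynomial.coeff_X, MvPolynomial.coeff_C_mul,
        MvPolynomial.coeff_X']
      rw [if_pos rfl, if_neg (by
        intro h
        have := DFunLike.congr_fun h 0
        simp [Finsupp.single_apply] at this)]
      ring
    have hmem : (Finsupp.single 0 1 : Fin 2 →₀ ℕ) ∈
        (MvPolynomial.X 0 - MvPolynomial.C a * MvPolynomial.X 1 :
          MvPolynomial (Fin 2) K).support := by
      rw [MvPolynomial.mem_support_iff, hc]; exact one_ne_zero
    have := MvPolynomial.le_totalDegree hmem
    rw [Finsupp.sum_single_index] at this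
    · omega
    · rfl
  · refine ⟨hmog 4 R, ?_⟩
    apply eq_of_eval_ne_zero
    intro s t ht
    rw [homog_eval_chart hG s t ht, ← hP, hPR]
    rw [MvPolynomial.eval_mul, MvPolynomial.eval_pow, hmog_eval_ne hRdeg s t ht]
    simp only [MvPolynomial.eval_sub, MvPolynomial.eval_mul, MvPolynomial.eval_X,
      MvPolynomial.eval_C]
    have : (![s, t] : Fin 2 → K) 0 = s := rfl
    have h2 : (![s, t] : Fin 2 → K) 1 = t := rfl
    rw [this, h2]
    rw [Polynomial.eval_mul, Polynomial.eval_pow, Polynomial.eval_sub, Polynomial.eval_X,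
      Polynomial.eval_C]
    field_simp

end FieldPart

lemma int_hom_eq {R : Type*} [Ring R] (f g : ℤ →+* R) : f = g := Subsingleton.elim f g

lemma pipeline (Gz : MvPolynomial (Fin 2) ℤ) (hhom : Gz.IsHomogeneous 6) (hne : Gz ≠ 0)
    (t₀ : ℝ)
    (hnonneg : ∀ t : ℝ, 0 ≤ ((chart Gz).map (Int.castRingHom ℝ)).eval t)
    (hroot : ((chart Gz).map (Int.castRingHom ℝ)).eval t₀ = 0) :
    ∃ g : MvPolynomial (Fin 2) Qbar, 0 < g.totalDegree ∧
      g ^ 2 ∣ MvPolynomial.map (Int.castRingHom Qbar) Gz := by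
  set Pr : Polynomial ℝ := (chart Gz).map (Int.castRingHom ℝ) with hPr
  have hderiv : Pr.derivative.eval t₀ = 0 := by
    have hmin : IsLocalMin (fun t : ℝ => Pr.eval t) t₀ := by
      apply Filter.Eventually.of_forall
      intro t
      show Pr.eval t₀ ≤ Pr.eval t
      rw [hroot]
      exact hnonneg t
    have := hmin.deriv_eq_zero
    rwa [Polynomial.deriv] at this
  set pQ : Polynomial ℚ := (chart Gz).map (Int.castRingHom ℚ) with hpQ
  have hmapr : pQ.map (Rat.castHom ℝ) = Pr := by
    rw [hpQ, hPr, Polynomial.map_map, int_hom_eq ((Rat.castHom ℝ).comp (Int.castRingHom ℚ))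
      (Int.castRingHom ℝ)]
  set Gbar : MvPolynomial (Fin 2) Qbar := MvPolynomial.map (Int.castRingHom Qbar) Gz with hGbar
  have hGbarhom : Gbar.IsHomogeneous 6 := hhom.map _
  have hGbarne : Gbar ≠ 0 := by
    intro h
    exact hne (MvPolynomial.map_injective (Int.castRingHom Qbar) Int.cast_injective
      (by rw [map_zero]; exact h))
  have hchartbar : chart Gbar = pQ.map (algebraMap ℚ Qbar) := by
    rw [hGbar, chart_map, hpQ, Polynomial.map_map, int_hom_eq ((algebraMap ℚ Qbar).comp
      (Int.castRingHom ℚ)) (Int.castRingHom Qbar)]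
  have hpQne : pQ ≠ 0 := by
    intro h
    apply hGbarne
    apply eq_zero_of_chart_eq_zero hGbarhom
    rw [hchartbar, h, Polynomial.map_zero]
  clear_value Pr pQ
  set g₀ : Polynomial ℚ := EuclideanDomain.gcd pQ pQ.derivative with hg₀
  have hg₀ne : g₀ ≠ 0 := by
    rw [hg₀, Ne, EuclideanDomain.gcd_eq_zero_iff]
    intro ⟨h, _⟩; exact hpQne h
  have hg₀l : g₀ ∣ pQ := EuclideanDomain.gcd_dvd_left _ _
  have hg₀r : g₀ ∣ pQ.derivative := EuclideanDomain.gcd_dvd_right _ _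
  have hrootg : (g₀.map (Rat.castHom ℝ)).eval t₀ = 0 := by
    have hb := EuclideanDomain.gcd_eq_gcd_ab pQ pQ.derivative
    rw [← hg₀] at hb
    have : g₀.map (Rat.castHom ℝ) =
        pQ.map (Rat.castHom ℝ) * (EuclideanDomain.gcdA pQ pQ.derivative).map (Rat.castHom ℝ)
        + (pQ.derivative).map (Rat.castHom ℝ) *
            (EuclideanDomain.gcdB pQ pQ.derivative).map (Rat.castHom ℝ) := by
      rw [← Polynomial.map_mul, ← Polynomial.map_mul, ← Polynomial.map_add]
      exact congrArg _ hb
    rw [this, Polynomial.eval_add, Polynomial.eval_mul, Polynomial.eval_mul, hmapr, hroot,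
      ← Polynomial.derivative_map, hmapr, hderiv]
    ring
  have hdegg : 0 < g₀.degree := by
    have h1 : (g₀.map (Rat.castHom ℝ)) ≠ 0 := by
      intro h
      exact hg₀ne (Polynomial.map_injective _ (Rat.cast_injective) (by rw [h, Polynomial.map_zero]))
    have := Polynomial.degree_pos_of_root h1 hrootg
    rwa [Polynomial.degree_map] at this
  have hdegg2 : (g₀.map (algebraMap ℚ Qbar)).degree ≠ 0 := by
    rw [Polynomial.degree_map]
    exact ne_of_gt hdegg
  obtain ⟨a, ha⟩ := IsAlgClosed.exists_root (g₀.map (algebraMap ℚ Qbar)) hdegg2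
  have haP : (chart Gbar).eval a = 0 := by
    obtain ⟨c, hc⟩ := hg₀l
    rw [hchartbar, hc, Polynomial.map_mul, Polynomial.eval_mul, ha, zero_mul]
  have haP' : ((chart Gbar).derivative).eval a = 0 := by
    obtain ⟨c, hc⟩ := hg₀r
    rw [hchartbar, Polynomial.derivative_map, hc, Polynomial.map_mul, Polynomial.eval_mul, ha,
      zero_mul]
  exact core Gbar hGbarhom hGbarne a haP haP'

/-- real evaluation at rational directions is a scaled integer evaluation -/
lemma real_eval_rat {Gz : MvPolynomial (Fin 2) ℤ} (hhom : Gz.IsHomogeneous 6) (q : ℚ) :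
    ((chart Gz).map (Int.castRingHom ℝ)).eval (q : ℝ) * ((q.den : ℝ)) ^ 6 =
      ((MvPolynomial.eval ![q.num, (q.den : ℤ)] Gz : ℤ) : ℝ) := by
  set Gr := MvPolynomial.map (Int.castRingHom ℝ) Gz with hGr
  have hGrhom : Gr.IsHomogeneous 6 := hhom.map _
  rw [← chart_map, chart_eval]
  have key : MvPolynomial.eval (fun i => ((q.den:ℝ)) * (![(q:ℝ), 1] : Fin 2 → ℝ) i) Gr
      = ((q.den : ℝ))^6 * MvPolynomial.eval ![(q:ℝ), 1] Gr := eval_homog_smul hGrhom _ _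
  have hv : (fun i => ((q.den:ℝ)) * (![(q:ℝ), 1] : Fin 2 → ℝ) i)
      = fun i => (((![q.num, (q.den : ℤ)] : Fin 2 → ℤ) i : ℤ) : ℝ) := by
    funext i
    fin_cases i
    · show (q.den : ℝ) * (q : ℝ) = ((q.num : ℤ) : ℝ)
      rw [mul_comm, Rat.cast_def, div_mul_cancel₀]
      exact_mod_cast q.den_ne_zero
    · simp
  rw [hv] at key
  rw [← eval_int_cast] at key
  rw [← hGr, mul_comm]
  exact key.symm

lemma chart_nonneg {Gz : MvPolynomial (Fin 2) ℤ} (hhom : Gz.IsHomogeneous 6)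
    (hnn : ∀ a b : ℤ, 0 ≤ MvPolynomial.eval ![a, b] Gz) (t : ℝ) :
    0 ≤ ((chart Gz).map (Int.castRingHom ℝ)).eval t := by
  set Pr : Polynomial ℝ := (chart Gz).map (Int.castRingHom ℝ) with hPr
  have hrat : ∀ q : ℚ, 0 ≤ Pr.eval (q : ℝ) := by
    intro q
    have heq := real_eval_rat hhom q
    have hden : (0:ℝ) < ((q.den : ℝ)) ^ 6 := by
      have : (0:ℝ) < (q.den : ℝ) := by exact_mod_cast q.pos
      positivity
    by_contra hlt
    push_neg at hlt
    have hneg : Pr.eval (q:ℝ) * ((q.den : ℝ))^6 < 0 := mul_neg_of_neg_of_pos hlt hden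
    rw [heq] at hneg
    have : (0:ℝ) ≤ ((MvPolynomial.eval ![q.num, (q.den : ℤ)] Gz : ℤ) : ℝ) := by
      exact_mod_cast hnn q.num (q.den : ℤ)
    linarith
  have hclosed : IsClosed {s : ℝ | 0 ≤ Pr.eval s} :=
    isClosed_le continuous_const (Polynomial.continuous Pr)
  have hsub : Set.range ((↑) : ℚ → ℝ) ⊆ {s : ℝ | 0 ≤ Pr.eval s} := by
    rintro _ ⟨q, rfl⟩; exact hrat q
  have hmem : t ∈ closure (Set.range ((↑) : ℚ → ℝ)) := by
    rw [(Rat.denseRange_cast (𝕜 := ℝ)).closure_eq]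
    trivial
  exact (hclosed.closure_subset_iff.mpr hsub) hmem

lemma growth_half {Gz : MvPolynomial (Fin 2) ℤ} (hhom : Gz.IsHomogeneous 6) {c : ℝ}
    (h1 : ∀ t : ℝ, t ∈ Set.Icc (-1:ℝ) 1 →
      c ≤ ((chart Gz).map (Int.castRingHom ℝ)).eval t)
    (a b : ℤ) (hab : |a| ≤ |b|) (hb : b ≠ 0) :
    c * ((|b| : ℤ) : ℝ) ^ 6 ≤ ((MvPolynomial.eval ![a, b] Gz : ℤ) : ℝ) := by
  set Pr : Polynomial ℝ := (chart Gz).map (Int.castRingHom ℝ) with hPr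
  set Gr : MvPolynomial (Fin 2) ℝ := MvPolynomial.map (Int.castRingHom ℝ) Gz with hGr
  have hGrhom : Gr.IsHomogeneous 6 := hhom.map _
  have hbne : ((b:ℤ):ℝ) ≠ 0 := by exact_mod_cast hb
  have hcast : ((MvPolynomial.eval ![a, b] Gz : ℤ) : ℝ) =
      MvPolynomial.eval ![(a:ℝ), (b:ℝ)] Gr := by
    rw [eval_int_cast Gz ![a,b], hGr]
    have hveq : (fun i => ((![a,b] : Fin 2 → ℤ) i : ℝ)) = (![(a:ℝ), (b:ℝ)] : Fin 2 → ℝ) := by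
      funext i; fin_cases i <;> simp
    rw [hveq]
  have heval : MvPolynomial.eval ![(a:ℝ), (b:ℝ)] Gr
      = ((b:ℝ)) ^ 6 * Pr.eval ((a:ℝ) / (b:ℝ)) := by
    rw [homog_eval_chart hGrhom _ _ hbne, hGr, chart_map, ← hPr]
  have hmem : (a:ℝ)/(b:ℝ) ∈ Set.Icc (-1:ℝ) 1 := by
    rw [Set.mem_Icc]
    constructor
    · have habs : |(a:ℝ)/(b:ℝ)| ≤ 1 := by
        rw [abs_div, div_le_one (abs_pos.mpr hbne)]
        exact_mod_cast hab
      linarith [abs_le.mp habs]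
    · calc (a:ℝ)/(b:ℝ) ≤ |(a:ℝ)/(b:ℝ)| := le_abs_self _
        _ ≤ 1 := by
          rw [abs_div, div_le_one (abs_pos.mpr hbne)]
          exact_mod_cast hab
  have hpow : (((|b| : ℤ)) : ℝ) ^ 6 = ((b:ℝ)) ^ 6 := by
    rw [Int.cast_abs, pow_abs, abs_of_nonneg (by positivity : (0:ℝ) ≤ ((b:ℝ))^6)]
  rw [hcast, heval, hpow]
  have hb6 : (0:ℝ) ≤ ((b:ℝ))^6 := by positivity
  calc c * ((b:ℝ))^6 ≤ Pr.eval ((a:ℝ)/(b:ℝ)) * ((b:ℝ))^6 :=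
        mul_le_mul_of_nonneg_right (h1 _ hmem) hb6
    _ = ((b:ℝ))^6 * Pr.eval ((a:ℝ)/(b:ℝ)) := mul_comm _ _

lemma rename_swap_swap {R : Type*} [CommRing R] (p : MvPolynomial (Fin 2) R) :
    MvPolynomial.rename (⇑(Equiv.swap (0:Fin 2) 1))
      (MvPolynomial.rename (⇑(Equiv.swap (0:Fin 2) 1)) p) = p := by
  rw [MvPolynomial.rename_rename]
  have : (⇑(Equiv.swap (0:Fin 2) 1) ∘ ⇑(Equiv.swap (0:Fin 2) 1)) = id := by
    funext i; simp
  rw [this, MvPolynomial.rename_id, AlgHom.id_apply]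

lemma comp_swap_vec {α : Type*} (a b : α) :
    (![a, b] : Fin 2 → α) ∘ ⇑(Equiv.swap (0:Fin 2) 1) = ![b, a] := by
  funext i; fin_cases i <;> simp


lemma scalar_key {c γ M d1 d2 H n : ℝ} (hc : 0 < c) (hH : 0 ≤ H) (hM : 0 ≤ M) (hn : 0 ≤ n)
    (hd1 : 1 ≤ d1)
    (hγK : ((4 * M + 2) / c + 1) ^ 6 ≤ γ) (hγB : 2 * (d1 + |d2|) / c ≤ γ) (hγ1 : 1 ≤ γ)
    (hcomb : c * H ^ 6 ≤ d1 * n + d2 + M * (H ^ 5 + 1)) : H ^ 6 ≤ γ * (n + 1) := by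
  have hγ0 : (0:ℝ) < γ := lt_of_lt_of_le zero_lt_one hγ1
  set K : ℝ := (4 * M + 2) / c + 1 with hKdef
  clear_value K
  have hK1 : (1:ℝ) ≤ K := by
    have : (0:ℝ) < (4 * M + 2) / c := by positivity
    rw [hKdef]; linarith
  rcases le_or_gt H K with hHK | hHK
  · calc H ^ 6 ≤ K ^ 6 := pow_le_pow_left₀ hH hHK 6
      _ ≤ γ := hγK
      _ = γ * 1 := (mul_one γ).symm
      _ ≤ γ * (n + 1) := by nlinarith [mul_nonneg (le_of_lt hγ0) hn]
  · have hH1 : (1:ℝ) ≤ H := le_trans hK1 hHK.le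
    have hH5 : (1:ℝ) ≤ H ^ 5 := one_le_pow₀ hH1
    have hcH : 4 * M + 2 ≤ c * H := by
      have hdiv2 : (4 * M + 2) / c < H := by rw [hKdef] at hHK; linarith
      rw [div_lt_iff₀ hc] at hdiv2
      linarith
    have e1 : M * (H ^ 5 + 1) ≤ 2 * M * H ^ 5 := by nlinarith [mul_le_mul_of_nonneg_left hH5 hM]
    have e2 : 4 * M * H ^ 5 ≤ c * H ^ 6 := by
      nlinarith [mul_le_mul_of_nonneg_right hcH (pow_nonneg hH 5)]
    have hA : c * H ^ 6 ≤ 2 * (d1 * n + d2) := by linarith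
    have hAB : d1 * n + d2 ≤ (d1 + |d2|) * (n + 1) := by
      have h1 : d2 ≤ |d2| := le_abs_self _
      have h2 : (0:ℝ) ≤ |d2| := abs_nonneg _
      nlinarith
    have hH6 : H ^ 6 ≤ 2 * (d1 + |d2|) / c * (n + 1) := by
      rw [div_mul_eq_mul_div, le_div_iff₀ hc]
      nlinarith
    calc H ^ 6 ≤ 2 * (d1 + |d2|) / c * (n + 1) := hH6
      _ ≤ γ * (n + 1) := mul_le_mul_of_nonneg_right hγB (by linarith)

lemma scalar_tail {γ W z : ℝ} {β N : ℕ} (hW : W = (N:ℝ) + 1) (hγ1 : 1 ≤ γ)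
    (hW1 : 1 ≤ W) (hWγ : 15625 * γ < W) (hz0 : 0 ≤ z) (hz1 : 1 ≤ z)
    (hz6 : z ^ (6:ℕ) = γ * W) (hβz : (β:ℝ) ≤ 2 * z)
    (hcount : N + 1 ≤ (2 * β + 1) ^ 2) : False := by
  have hcountr : W ≤ ((2 * β + 1 : ℕ) : ℝ) ^ 2 := by
    rw [hW]
    exact_mod_cast hcount
  have h5z : ((2 * β + 1 : ℕ) : ℝ) ≤ 5 * z := by
    push_cast
    linarith
  have hW25 : W ≤ 25 * z ^ 2 := by
    refine le_trans hcountr ?_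
    calc ((2 * β + 1 : ℕ) : ℝ) ^ 2 ≤ (5 * z) ^ 2 := pow_le_pow_left₀ (by positivity) h5z 2
      _ = 25 * z ^ 2 := by ring
  have hW3 : W ^ 3 ≤ 15625 * (γ * W) := by
    calc W ^ 3 ≤ (25 * z ^ 2) ^ 3 := pow_le_pow_left₀ (by linarith) hW25 3
      _ = 15625 * z ^ (6:ℕ) := by ring
      _ = 15625 * (γ * W) := by rw [hz6]
  have hWpos : (0:ℝ) < W := lt_of_lt_of_le zero_lt_one hW1
  have hfin1 : 15625 * (γ * W) < W * W := by nlinarith [mul_lt_mul_of_pos_right hWγ hWpos]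
  have hfin2 : W * W ≤ W ^ 3 := by nlinarith [sq_nonneg W]
  linarith


end SLF
open SLF Polynomial in
/-- If `F ∈ ℤ[x,y]` has degree 6 and its degree-6 homogeneous component `F₆` is
square-free over an algebraic closure of `ℚ` (i.e. `F₆` is not divisible by the square
of any nonconstant polynomial over `ℚ̄`), then `F` is not arithmetically complete. -/
theorem squarefree_leading_form_not_arithmetically_complete
    (F : MvPolynomial (Fin 2) ℤ) (hdeg : F.totalDegree = 6)
    (hsf : ∀ g : MvPolynomial (Fin 2) (AlgebraicClosure ℚ),
      0 < g.totalDegree → ¬ g ^ 2 ∣ toQbar (homogeneousComponent 6 F)) :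
    ¬ ArithmeticallyComplete F := by
  rintro ⟨D₁, D₂, hD₁, hset⟩
  set F₆ := homogeneousComponent 6 F with hF₆def
  have hF₆hom : F₆.IsHomogeneous 6 := homogeneousComponent_isHomogeneous 6 F
  -- `F₆ ≠ 0`
  have hFne : F ≠ 0 := by
    intro h; rw [h] at hdeg; simp at hdeg
  have hF₆ne : F₆ ≠ 0 := by
    have hne : F.support.Nonempty := by
      rw [Finset.nonempty_iff_ne_empty]
      intro h
      exact hFne (MvPolynomial.support_eq_empty.mp h)
    obtain ⟨m, hm, hsup⟩ :=
      Finset.exists_mem_eq_sup F.support hne (fun s : Fin 2 →₀ ℕ => s.sum fun _ e => e)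
    have hmdeg : (∑ i ∈ m.support, m i) = 6 := by
      rw [MvPolynomial.totalDegree] at hdeg
      rw [← hdeg, hsup]
      rfl
    have : MvPolynomial.coeff m F₆ ≠ 0 := by
      rw [hF₆def, MvPolynomial.coeff_homogeneousComponent,
        if_pos (show m.degree = 6 from by rw [Finsupp.degree]; exact hmdeg)]
      exact MvPolynomial.mem_support_iff.mp hm
    intro h
    rw [h] at this
    simp at this
  -- membership facts
  have hmem_val : ∀ x y : ℤ, ∃ n : ℤ, 0 ≤ n ∧ MvPolynomial.eval ![x, y] F = D₁ * n + D₂ := by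
    intro x y
    have : MvPolynomial.eval ![x, y] F ∈
        {m : ℤ | ∃ x y : ℤ, MvPolynomial.eval ![x, y] F = m} := ⟨x, y, rfl⟩
    rw [hset] at this
    exact this
  have hlow : ∀ x y : ℤ, D₂ ≤ MvPolynomial.eval ![x, y] F := by
    intro x y
    obtain ⟨n, hn, he⟩ := hmem_val x y
    nlinarith
  have hrep : ∀ n : ℤ, 0 ≤ n → ∃ x y : ℤ, MvPolynomial.eval ![x, y] F = D₁ * n + D₂ := by
    intro n hn
    have : D₁ * n + D₂ ∈ {m : ℤ | ∃ n : ℤ, 0 ≤ n ∧ m = D₁ * n + D₂} := ⟨n, hn, rfl⟩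
    rw [← hset] at this
    obtain ⟨x, y, h⟩ := this
    exact ⟨x, y, h⟩
  -- decomposition into homogeneous components
  have hFsum : (∑ j ∈ Finset.range 7, homogeneousComponent j F) = F := by
    have := MvPolynomial.sum_homogeneousComponent F
    rwa [hdeg] at this
  have hdecomp : ∀ t a b : ℤ, MvPolynomial.eval ![t * a, t * b] F =
      ∑ j ∈ Finset.range 7, t ^ j * MvPolynomial.eval ![a, b] (homogeneousComponent j F) := by
    intro t a b
    conv_lhs => rw [← hFsum]
    rw [map_sum]
    apply Finset.sum_congr rfl
    intro j _
    have hv : (![t * a, t * b] : Fin 2 → ℤ) = fun i => t * (![a, b] : Fin 2 → ℤ) i := by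
      funext i; fin_cases i <;> simp
    rw [hv, eval_homog_smul (homogeneousComponent_isHomogeneous j F) t ![a, b]]
  -- nonnegativity of `F₆` on `ℤ²`
  have hpos : ∀ a b : ℤ, 0 ≤ MvPolynomial.eval ![a, b] F₆ := by
    intro a b
    by_contra hneg
    push_neg at hneg
    have h6 : MvPolynomial.eval ![a, b] F₆ ≤ -1 := by omega
    set S := ∑ j ∈ Finset.range 6,
      |MvPolynomial.eval ![a, b] (homogeneousComponent j F)| with hSdef
    have hS0 : 0 ≤ S := Finset.sum_nonneg fun _ _ => abs_nonneg _
    set t := S + |D₂| + 1 with htdef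
    have ht1 : 1 ≤ t := by
      have := abs_nonneg D₂; omega
    have ht0 : 0 ≤ t := by omega
    have hval := hdecomp t a b
    rw [Finset.sum_range_succ] at hval
    have hsum_le : (∑ j ∈ Finset.range 6,
        t ^ j * MvPolynomial.eval ![a, b] (homogeneousComponent j F)) ≤ t ^ 5 * S := by
      rw [hSdef, Finset.mul_sum]
      apply Finset.sum_le_sum
      intro j hj
      rw [Finset.mem_range] at hj
      calc t ^ j * MvPolynomial.eval ![a, b] (homogeneousComponent j F)
          ≤ t ^ j * |MvPolynomial.eval ![a, b] (homogeneousComponent j F)| :=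
            mul_le_mul_of_nonneg_left (le_abs_self _) (pow_nonneg ht0 j)
        _ ≤ t ^ 5 * |MvPolynomial.eval ![a, b] (homogeneousComponent j F)| :=
            mul_le_mul_of_nonneg_right (pow_le_pow_right₀ ht1 (by omega)) (abs_nonneg _)
    have h6' : t ^ 6 * MvPolynomial.eval ![a, b] F₆ ≤ t ^ 6 * (-1) :=
      mul_le_mul_of_nonneg_left h6 (pow_nonneg ht0 6)
    have h56 : t ^ 6 = t ^ 5 * t := by ring
    have ht5 : 1 ≤ t ^ 5 := one_le_pow₀ ht1
    have hD2 : -|D₂| ≤ D₂ := neg_abs_le D₂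
    have hchain : MvPolynomial.eval ![t * a, t * b] F < D₂ := by
      rw [hval]
      have hSt : S - t = -(|D₂| + 1) := by omega
      have heq2 : t ^ 5 * S + t ^ 6 * (-1) = t ^ 5 * (-(|D₂| + 1)) := by
        rw [show t ^ 5 * S + t ^ 6 * (-1) = t ^ 5 * (S - t) from by ring, hSt]
      have hfin : t ^ 5 * (-(|D₂| + 1)) ≤ -(|D₂| + 1) := by nlinarith [ht5, abs_nonneg D₂]
      linarith [hsum_le, h6', heq2, hfin, hD2]
    exact absurd (hlow (t * a) (t * b)) (not_le.mpr hchain)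
  -- swapped polynomial
  set F₆σ : MvPolynomial (Fin 2) ℤ := MvPolynomial.rename (⇑(Equiv.swap (0:Fin 2) 1)) F₆
    with hF₆σdef
  have hσhom : F₆σ.IsHomogeneous 6 := hF₆hom.rename_isHomogeneous
  have hkeyσ : MvPolynomial.rename (⇑(Equiv.swap (0:Fin 2) 1)) F₆σ = F₆ := by
    rw [hF₆σdef, rename_swap_swap]
  have hσne : F₆σ ≠ 0 := by
    intro h
    apply hF₆ne
    rw [← hkeyσ, h, map_zero]
  have hσeval : ∀ a b : ℤ, MvPolynomial.eval ![a, b] F₆σ = MvPolynomial.eval ![b, a] F₆ := by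
    intro a b
    rw [hF₆σdef, MvPolynomial.eval_rename, comp_swap_vec]
  have hσpos : ∀ a b : ℤ, 0 ≤ MvPolynomial.eval ![a, b] F₆σ := by
    intro a b; rw [hσeval]; exact hpos b a
  -- real minima on [-1,1]
  set Pr : Polynomial ℝ := (chart F₆).map (Int.castRingHom ℝ) with hPrdef
  set Qr : Polynomial ℝ := (chart F₆σ).map (Int.castRingHom ℝ) with hQrdef
  have hPrnn : ∀ t : ℝ, 0 ≤ Pr.eval t := chart_nonneg hF₆hom hpos
  have hQrnn : ∀ t : ℝ, 0 ≤ Qr.eval t := chart_nonneg hσhom hσpos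
  obtain ⟨t₁, ht₁mem, ht₁min⟩ := (isCompact_Icc (a := (-1:ℝ)) (b := 1)).exists_isMinOn
    (Set.nonempty_Icc.mpr (by norm_num)) (Polynomial.continuous Pr).continuousOn
  obtain ⟨t₂, ht₂mem, ht₂min⟩ := (isCompact_Icc (a := (-1:ℝ)) (b := 1)).exists_isMinOn
    (Set.nonempty_Icc.mpr (by norm_num)) (Polynomial.continuous Qr).continuousOn
  rcases eq_or_lt_of_le (hPrnn t₁) with h₁ | h₁
  · -- Pr has a real zero: contradiction with squarefreeness
    obtain ⟨g, hg1, hg2⟩ := pipeline F₆ hF₆hom hF₆ne t₁ hPrnn h₁.symm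
    exact hsf g hg1 hg2
  rcases eq_or_lt_of_le (hQrnn t₂) with h₂ | h₂
  · obtain ⟨g, hg1, hg2⟩ := pipeline F₆σ hσhom hσne t₂ hQrnn h₂.symm
    -- transfer back through the swap
    obtain ⟨w, hw⟩ := hg2
    have hmr : MvPolynomial.map (Int.castRingHom Qbar) F₆σ =
        MvPolynomial.rename (⇑(Equiv.swap (0:Fin 2) 1)) (toQbar F₆) := by
      rw [hF₆σdef, MvPolynomial.map_rename]
      rfl
    have hT : toQbar F₆ =
        (MvPolynomial.rename (⇑(Equiv.swap (0:Fin 2) 1)) g) ^ 2 *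
          MvPolynomial.rename (⇑(Equiv.swap (0:Fin 2) 1)) w := by
      have := congrArg (MvPolynomial.rename (⇑(Equiv.swap (0:Fin 2) 1))) hw
      rw [hmr, rename_swap_swap] at this
      rw [this, map_mul, map_pow]
    refine hsf (MvPolynomial.rename (⇑(Equiv.swap (0:Fin 2) 1)) g) ?_ ⟨_, hT⟩
    calc 0 < g.totalDegree := hg1
      _ = (MvPolynomial.rename (⇑(Equiv.swap (0:Fin 2) 1))
            (MvPolynomial.rename (⇑(Equiv.swap (0:Fin 2) 1)) g)).totalDegree := by
          rw [rename_swap_swap]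
      _ ≤ (MvPolynomial.rename (⇑(Equiv.swap (0:Fin 2) 1)) g).totalDegree :=
          MvPolynomial.totalDegree_rename_le _ _
  -- positive-definite case: growth and counting
  set c : ℝ := min (Pr.eval t₁) (Qr.eval t₂) with hcdef
  have hc : 0 < c := lt_min h₁ h₂
  have hgrow : ∀ a b : ℤ, c * ((max |a| |b| : ℤ) : ℝ) ^ 6 ≤
      ((MvPolynomial.eval ![a, b] F₆ : ℤ) : ℝ) := by
    intro a b
    rcases le_total |a| |b| with hab | hab
    · rcases eq_or_ne b 0 with hb | hb
      · have ha : a = 0 := abs_eq_zero.mp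
          (le_antisymm (by simpa [hb] using hab) (abs_nonneg a))
        rw [ha, hb]
        simp only [abs_zero, max_self, Int.cast_zero]
        rw [zero_pow (by norm_num), mul_zero]
        exact_mod_cast hpos 0 0
      · have h1 : ∀ t : ℝ, t ∈ Set.Icc (-1:ℝ) 1 → c ≤ Pr.eval t := fun t ht =>
          le_trans (min_le_left _ _) (ht₁min ht)
        have := growth_half hF₆hom h1 a b hab hb
        rwa [max_eq_right hab]
    · rcases eq_or_ne a 0 with ha | hb
      · have hb : b = 0 := abs_eq_zero.mp
          (le_antisymm (by simpa [ha] using hab) (abs_nonneg b))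
        rw [ha, hb]
        simp only [abs_zero, max_self, Int.cast_zero]
        rw [zero_pow (by norm_num), mul_zero]
        exact_mod_cast hpos 0 0
      · have h1 : ∀ t : ℝ, t ∈ Set.Icc (-1:ℝ) 1 → c ≤ Qr.eval t := fun t ht =>
          le_trans (min_le_right _ _) (ht₂min ht)
        have := growth_half hσhom h1 b a hab hb
        rw [hσeval b a] at this
        rwa [max_eq_left hab]
    -- mass of lower-order coefficients
  set M : ℤ := ∑ j ∈ Finset.range 6, ∑ m ∈ (homogeneousComponent j F).support,
      |MvPolynomial.coeff m (homogeneousComponent j F)| with hMdef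
  have hM0 : 0 ≤ M :=
    Finset.sum_nonneg fun j _ => Finset.sum_nonneg fun m _ => abs_nonneg _
  have hFlow : ∀ a b : ℤ, MvPolynomial.eval ![a, b] F₆ ≤
      MvPolynomial.eval ![a, b] F + M * ((max |a| |b|) ^ 5 + 1) := by
    intro a b
    set H := max |a| |b| with hHdef
    have hH0 : 0 ≤ H := le_trans (abs_nonneg a) (le_max_left _ _)
    have hvec : (![1 * a, 1 * b] : Fin 2 → ℤ) = ![a, b] := by
      funext i; fin_cases i <;> simp
    have hdec := hdecomp 1 a b
    rw [hvec] at hdec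
    simp only [one_pow, one_mul] at hdec
    rw [Finset.sum_range_succ] at hdec
    have habs : ∀ j ∈ Finset.range 6,
        |MvPolynomial.eval ![a, b] (homogeneousComponent j F)| ≤
        (∑ m ∈ (homogeneousComponent j F).support,
          |MvPolynomial.coeff m (homogeneousComponent j F)|) * (H ^ 5 + 1) := by
      intro j hj
      rw [Finset.mem_range] at hj
      refine le_trans (abs_eval_le (homogeneousComponent_isHomogeneous j F) a b) ?_
      apply mul_le_mul_of_nonneg_left _ (Finset.sum_nonneg fun m _ => abs_nonneg _)
      rw [← hHdef]
      rcases eq_or_lt_of_le hH0 with hH | hH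
      · rw [← hH]
        rcases Nat.eq_zero_or_pos j with rfl | hj0
        · norm_num
        · rw [zero_pow (by omega : j ≠ 0)]
          norm_num
      · have h1H : 1 ≤ H := hH
        have h5 : H ^ j ≤ H ^ 5 := pow_le_pow_right₀ h1H (by omega)
        linarith
    have hsum : -(∑ j ∈ Finset.range 6,
        MvPolynomial.eval ![a, b] (homogeneousComponent j F)) ≤ M * (H ^ 5 + 1) := by
      calc -(∑ j ∈ Finset.range 6, MvPolynomial.eval ![a, b] (homogeneousComponent j F))
          ≤ |∑ j ∈ Finset.range 6, MvPolynomial.eval ![a, b] (homogeneousComponent j F)| :=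
            neg_le_abs _
        _ ≤ ∑ j ∈ Finset.range 6,
            |MvPolynomial.eval ![a, b] (homogeneousComponent j F)| :=
            Finset.abs_sum_le_sum_abs _ _
        _ ≤ ∑ j ∈ Finset.range 6, (∑ m ∈ (homogeneousComponent j F).support,
            |MvPolynomial.coeff m (homogeneousComponent j F)|) * (H ^ 5 + 1) :=
            Finset.sum_le_sum habs
        _ = M * (H ^ 5 + 1) := by rw [hMdef, Finset.sum_mul]
    have : MvPolynomial.eval ![a, b] F₆ = MvPolynomial.eval ![a, b] F
        - ∑ j ∈ Finset.range 6, MvPolynomial.eval ![a, b] (homogeneousComponent j F) := by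
      rw [hdec, hF₆def]; ring
    linarith
  -- the sixth power of a witness point is linearly bounded
  set γ : ℝ := max (max (((4 * (M:ℝ) + 2) / c + 1) ^ 6)
      (2 * ((D₁:ℝ) + |(D₂:ℝ)|) / c)) 1 with hγdef
  have hγ1 : (1:ℝ) ≤ γ := le_max_right _ _
  have hγ0 : (0:ℝ) < γ := lt_of_lt_of_le zero_lt_one hγ1
  have hkey : ∀ n : ℕ, ∀ x y : ℤ, MvPolynomial.eval ![x, y] F = D₁ * (n:ℤ) + D₂ →
      ((max |x| |y| : ℤ) : ℝ) ^ 6 ≤ γ * ((n:ℝ) + 1) := by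
    intro n x y hxy
    set H : ℤ := max |x| |y| with hHdef
    have hH0 : (0:ℤ) ≤ H := le_trans (abs_nonneg x) (le_max_left _ _)
    have hHr : (0:ℝ) ≤ (H:ℝ) := by exact_mod_cast hH0
    have hg := hgrow x y
    have hfl := hFlow x y
    have hcomb : c * (H:ℝ) ^ 6 ≤ (D₁:ℝ) * (n:ℝ) + (D₂:ℝ) + (M:ℝ) * ((H:ℝ) ^ 5 + 1) := by
      have hflr : ((MvPolynomial.eval ![x, y] F₆ : ℤ) : ℝ) ≤
          (D₁:ℝ) * (n:ℝ) + (D₂:ℝ) + (M:ℝ) * ((H:ℝ) ^ 5 + 1) := by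
        have := hfl
        rw [hxy] at this
        exact_mod_cast this
      exact le_trans hg hflr
    have hMr : (0:ℝ) ≤ (M:ℝ) := by exact_mod_cast hM0
    have hn0 : (0:ℝ) ≤ (n:ℝ) := Nat.cast_nonneg n
    have hD₁r : (1:ℝ) ≤ (D₁:ℝ) := by exact_mod_cast hD₁
    refine scalar_key hc hHr hMr hn0 hD₁r ?_ ?_ hγ1 hcomb
    · exact le_trans (le_max_left _ _) (le_max_left _ _)
    · exact le_trans (le_max_right _ _) (le_max_left _ _)
  -- choose witnesses
  have hpts : ∀ n : ℕ, ∃ p : ℤ × ℤ,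
      MvPolynomial.eval ![p.1, p.2] F = D₁ * (n:ℤ) + D₂ := by
    intro n
    obtain ⟨x, y, h⟩ := hrep (n:ℤ) (Int.natCast_nonneg n)
    exact ⟨(x, y), h⟩
  choose pt hpt using hpts
  set N : ℕ := ⌈(15625:ℝ) * γ⌉₊ with hNdef
  set W : ℝ := (N:ℝ) + 1 with hWdef
  have hW1 : (1:ℝ) ≤ W := by rw [hWdef]; nlinarith [Nat.cast_nonneg (α := ℝ) N]
  have hWγ : 15625 * γ < W := by
    rw [hWdef]
    have := Nat.le_ceil ((15625:ℝ) * γ)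
    rw [← hNdef] at this
    linarith
  set z : ℝ := (γ * W) ^ ((6:ℝ)⁻¹) with hzdef
  have hγW1 : (1:ℝ) ≤ γ * W := by nlinarith
  have hz0 : (0:ℝ) ≤ z := Real.rpow_nonneg (by nlinarith) _
  have hz6 : z ^ (6:ℕ) = γ * W := by
    rw [hzdef, ← Real.rpow_natCast ((γ * W) ^ ((6:ℝ)⁻¹)) 6, ← Real.rpow_mul (by nlinarith)]
    norm_num
  have hz1 : (1:ℝ) ≤ z := by
    by_contra hlt
    push_neg at hlt
    have : z ^ (6:ℕ) < 1 := pow_lt_one₀ hz0 hlt (by norm_num)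
    rw [hz6] at this
    linarith
  set β : ℕ := ⌈z⌉₊ with hβdef
  have hβz : (β:ℝ) ≤ 2 * z := by
    have h1 : (β:ℝ) < z + 1 := by
      rw [hβdef]
      exact Nat.ceil_lt_add_one hz0
    linarith
  -- all witness points for n ≤ N lie in a box of radius β
  have hHβ : ∀ n : ℕ, n ≤ N → max |(pt n).1| |(pt n).2| ≤ (β:ℤ) := by
    intro n hn
    have hk := hkey n (pt n).1 (pt n).2 (hpt n)
    have hle : ((max |(pt n).1| |(pt n).2| : ℤ) : ℝ) ^ 6 ≤ z ^ (6:ℕ) := by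
      rw [hz6]
      refine le_trans hk ?_
      apply mul_le_mul_of_nonneg_left _ (le_of_lt hγ0)
      rw [hWdef]
      have : (n:ℝ) ≤ (N:ℝ) := by exact_mod_cast hn
      linarith
    have hHr : (0:ℝ) ≤ ((max |(pt n).1| |(pt n).2| : ℤ) : ℝ) := by
      have : (0:ℤ) ≤ max |(pt n).1| |(pt n).2| :=
        le_trans (abs_nonneg _) (le_max_left _ _)
      exact_mod_cast this
    have hlz : ((max |(pt n).1| |(pt n).2| : ℤ) : ℝ) ≤ z :=
      le_of_pow_le_pow_left₀ (by norm_num) hz0 hle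
    have : ((max |(pt n).1| |(pt n).2| : ℤ) : ℝ) ≤ (β:ℝ) :=
      le_trans hlz (Nat.le_ceil z)
    exact_mod_cast this
  -- counting
  have hcount : N + 1 ≤ (2 * β + 1) ^ 2 := by
    have hmaps : ∀ n ∈ Finset.range (N + 1),
        pt n ∈ (Finset.Icc (-(β:ℤ)) (β:ℤ)) ×ˢ (Finset.Icc (-(β:ℤ)) (β:ℤ)) := by
      intro n hn
      rw [Finset.mem_range] at hn
      have h := hHβ n (by omega)
      have h1 : |(pt n).1| ≤ (β:ℤ) := le_trans (le_max_left _ _) h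
      have h2 : |(pt n).2| ≤ (β:ℤ) := le_trans (le_max_right _ _) h
      rw [Finset.mem_product, Finset.mem_Icc, Finset.mem_Icc]
      exact ⟨⟨(abs_le.mp h1).1, (abs_le.mp h1).2⟩, ⟨(abs_le.mp h2).1, (abs_le.mp h2).2⟩⟩
    have hinj : Set.InjOn pt (Finset.range (N + 1)) := by
      intro n hn n' hn' hEq
      have h1 := hpt n
      have h2 := hpt n'
      rw [hEq] at h1
      rw [h1] at h2
      have : (n':ℤ) = (n:ℤ) := by
        have := mul_left_cancel₀ (ne_of_gt hD₁) (by linarith : D₁ * (n':ℤ) = D₁ * (n:ℤ))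
        exact this
      exact_mod_cast this.symm
    have hcard := Finset.card_le_card_of_injOn pt hmaps hinj
    rw [Finset.card_range] at hcard
    have hIcc : (Finset.Icc (-(β:ℤ)) (β:ℤ)).card = 2 * β + 1 := by
      rw [Int.card_Icc]
      have : ((β:ℤ) + 1 - -(β:ℤ)) = 2 * (β:ℤ) + 1 := by ring
      rw [this]
      omega
    rw [Finset.card_product, hIcc] at hcard
    calc N + 1 ≤ (2 * β + 1) * (2 * β + 1) := hcard
      _ = (2 * β + 1) ^ 2 := by ring
  -- final contradiction
  exact scalar_tail hWdef hγ1 hW1 hWγ hz0 hz1 hz6 hβz hcount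
end
end

section
/- Let F ∈ ℤ[x,y], and suppose there exist a single-variable polynomial 𝔉 ∈ ℚ[t] of degree d ≥ 2 and a polynomial G ∈ ℚ[x,y] such that F(x,y) = 𝔉(G(x,y)) identically. Then #{n ∈ [N,2N] ∩ ℤ : ∃(x,y) ∈ ℤ², F(x,y) = n} = O_F(N^{1/d}) as N → ∞. -/
open MvPolynomial

-- cast eval lemma
lemma aux_eval_map (F : MvPolynomial (Fin 2) ℤ) (v : Fin 2 → ℤ) :
    eval (fun i => ((v i : ℤ) : ℚ)) (MvPolynomial.map (Int.castRingHom ℚ) F)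
      = ((eval v F : ℤ) : ℚ) := by
  rw [eval_map, show ((eval v F : ℤ) : ℚ) = (Int.castRingHom ℚ) (eval₂ (RingHom.id ℤ) v F) by
    rw [eval₂_id]; rfl]
  rw [eval₂_comp_left]; rfl

lemma aux_eval_aeval (𝔉 : Polynomial ℚ) (G : MvPolynomial (Fin 2) ℚ) (v : Fin 2 → ℚ) :
    eval v (Polynomial.aeval G 𝔉) = Polynomial.eval (eval v G) 𝔉 := by
  have h1 : eval v (Polynomial.aeval G 𝔉) = aeval v (Polynomial.aeval G 𝔉) :=
    congrFun (congrArg _ (coe_aeval_eq_eval v).symm) _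
  rw [h1, ← Polynomial.aeval_algHom_apply]
  rw [show aeval v G = eval v G from congrFun (congrArg DFunLike.coe (coe_aeval_eq_eval v)) G]
  rw [Polynomial.coe_aeval_eq_eval]

-- clearing denominators
lemma aux_clear_denoms (G : MvPolynomial (Fin 2) ℚ) :
    ∃ D : ℕ, 0 < D ∧ ∀ v : Fin 2 → ℤ, ∃ k : ℤ,
      (k : ℚ) = (D : ℚ) * eval (fun i => ((v i : ℤ) : ℚ)) G := by
  refine ⟨∏ m ∈ G.support, (G.coeff m).den, Finset.prod_pos (fun m _ => (G.coeff m).pos), ?_⟩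
  intro v
  set D : ℕ := ∏ m ∈ G.support, (G.coeff m).den with hD
  have h : (D : ℚ) * eval (fun i => ((v i : ℤ) : ℚ)) G ∈ (Int.castRingHom ℚ).range := by
    rw [eval_eq, Finset.mul_sum]
    refine Subring.sum_mem _ (fun m hm => ?_)
    rw [← mul_assoc]
    refine Subring.mul_mem _ ?_ (Subring.prod_mem _ (fun i _ =>
      Subring.pow_mem _ (RingHom.mem_range_self (Int.castRingHom ℚ) (v i)) _))
    -- (D : ℚ) * coeff m ∈ range
    obtain ⟨c, hc⟩ := Finset.dvd_prod_of_mem (fun m => (G.coeff m).den) hm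
    refine RingHom.mem_range.mpr ⟨c * (G.coeff m).num, ?_⟩
    have hnum : ((G.coeff m).den : ℚ) * (G.coeff m) = (G.coeff m).num := by
      have hden : ((G.coeff m).den : ℚ) ≠ 0 := by
        exact_mod_cast (G.coeff m).den_nz
      rw [mul_comm]
      exact (eq_div_iff hden).mp (Rat.num_div_den (G.coeff m)).symm
    show ((c * (G.coeff m).num : ℤ) : ℚ) = (D : ℚ) * G.coeff m
    rw [hD, hc]
    push_cast
    rw [← hnum]
    ring
  obtain ⟨k, hk⟩ := h
  exact ⟨k, hk⟩

-- polynomial lower bound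
lemma aux_poly_lower (P : Polynomial ℝ) (h1 : 1 ≤ P.natDegree) (h0 : P ≠ 0) :
    ∃ B : ℝ, 1 ≤ B ∧ ∀ t : ℝ, B ≤ |t| →
      |P.leadingCoeff| / 2 * |t| ^ P.natDegree ≤ |P.eval t| := by
  set d := P.natDegree with hd
  set a := P.leadingCoeff with ha
  have ha0 : a ≠ 0 := Polynomial.leadingCoeff_ne_zero.mpr h0
  have hapos : 0 < |a| := abs_pos.mpr ha0
  set Q := P.eraseLead with hQ
  set e := d - 1 with he
  have hde : d = e + 1 := (Nat.succ_pred_eq_of_pos h1).symm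
  have hQd : Q.natDegree < d := lt_of_le_of_lt (Polynomial.eraseLead_natDegree_le P)
    (by omega)
  set S := ∑ i ∈ Finset.range d, |Q.coeff i| with hS
  have hS0 : 0 ≤ S := Finset.sum_nonneg (fun i _ => abs_nonneg _)
  have hQbound : ∀ t : ℝ, 1 ≤ |t| → |Q.eval t| ≤ S * |t| ^ e := by
    intro t ht
    rw [Polynomial.eval_eq_sum_range' hQd]
    calc |∑ i ∈ Finset.range d, Q.coeff i * t ^ i|
        ≤ ∑ i ∈ Finset.range d, |Q.coeff i * t ^ i| := Finset.abs_sum_le_sum_abs _ _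
      _ ≤ ∑ i ∈ Finset.range d, |Q.coeff i| * |t| ^ e := by
          refine Finset.sum_le_sum (fun i hi => ?_)
          rw [abs_mul, abs_pow]
          exact mul_le_mul_of_nonneg_left
            (pow_le_pow_right₀ ht (by simp at hi; omega)) (abs_nonneg _)
      _ = S * |t| ^ e := by rw [← Finset.sum_mul]
  refine ⟨max 1 (2 * (S + 1) / |a|), le_max_left _ _, fun t ht => ?_⟩
  have ht1 : 1 ≤ |t| := le_trans (le_max_left _ _) ht
  have htS : 2 * (S + 1) ≤ |a| * |t| := by
    have := le_trans (le_max_right 1 (2 * (S + 1) / |a|)) ht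
    calc 2 * (S + 1) = (2 * (S + 1) / |a|) * |a| := by field_simp
      _ ≤ |t| * |a| := mul_le_mul_of_nonneg_right this (le_of_lt hapos)
      _ = |a| * |t| := mul_comm _ _
  have hPQ : |a| * |t| ^ d ≤ |P.eval t| + |Q.eval t| := by
    have h2 : a * t ^ d = P.eval t - Q.eval t := by
      have := Polynomial.eraseLead_add_C_mul_X_pow P
      rw [← hQ, ← ha, ← hd] at this
      have := congrArg (Polynomial.eval t) this
      simp at this
      linarith [this]
    calc |a| * |t| ^ d = |a * t ^ d| := by rw [abs_mul, abs_pow]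
      _ = |P.eval t - Q.eval t| := by rw [h2]
      _ ≤ |P.eval t| + |Q.eval t| := abs_sub _ _
  have hQb := hQbound t ht1
  have hte : (1:ℝ) ≤ |t| ^ e := one_le_pow₀ ht1
  have htd : |t| ^ d = |t| ^ e * |t| := by rw [hde, pow_succ]
  nlinarith [mul_le_mul_of_nonneg_left htS (le_trans zero_le_one hte)]

/-- If `F ∈ ℤ[x,y]` can be written as `F = 𝔉 ∘ G` with `𝔉 ∈ ℚ[t]` of degree `d ≥ 2` and
`G ∈ ℚ[x,y]`, then `#ℛ_F([N, 2N]) = O_F(N^{1/d})`. -/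
theorem composed_polynomial_representation_count
    (F : MvPolynomial (Fin 2) ℤ) (𝔉 : Polynomial ℚ) (G : MvPolynomial (Fin 2) ℚ)
    (hd : 2 ≤ 𝔉.natDegree)
    (hcomp : MvPolynomial.map (Int.castRingHom ℚ) F = Polynomial.aeval G 𝔉) :
    ∃ C : ℝ, 0 < C ∧ ∀ N : ℕ, 1 ≤ N →
      (Set.ncard {n : ℤ | (N : ℤ) ≤ n ∧ n ≤ 2 * N ∧ ∃ x y : ℤ, eval ![x, y] F = n} : ℝ)
        ≤ C * (N : ℝ) ^ ((1 : ℝ) / (𝔉.natDegree : ℝ)) := by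
  classical
  obtain ⟨D, hDpos, hDG⟩ := aux_clear_denoms G
  choose k hk using hDG
  have h𝔉0 : 𝔉 ≠ 0 := fun h => by simp [h] at hd
  set d := 𝔉.natDegree with hdd
  set P := 𝔉.map (algebraMap ℚ ℝ) with hP
  have hPdeg : P.natDegree = d := Polynomial.natDegree_map _
  have hP0 : P ≠ 0 := Polynomial.map_ne_zero h𝔉0
  have hapos : (0:ℝ) < |P.leadingCoeff| := abs_pos.mpr (Polynomial.leadingCoeff_ne_zero.mpr hP0)
  obtain ⟨B, hB1, hBlow⟩ := aux_poly_lower P (by omega) hP0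
  set a := |P.leadingCoeff| with ha
  set B' := B + (4 / a) ^ ((1:ℝ)/(d:ℝ)) with hB'
  have hrnn : (0:ℝ) ≤ (4 / a) ^ ((1:ℝ)/(d:ℝ)) := Real.rpow_nonneg (by positivity) _
  have hB'1 : 1 ≤ B' := le_add_of_le_of_nonneg hB1 hrnn
  have hd0 : (0:ℝ) < (d:ℝ) := by exact_mod_cast (by omega : 0 < d)
  refine ⟨2 * D * B' + 1, by positivity, fun N hN => ?_⟩
  set ε := (N:ℝ) ^ ((1:ℝ)/(d:ℝ)) with hε
  have hε1 : 1 ≤ ε := Real.one_le_rpow (by exact_mod_cast hN) (by positivity)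
  have hε0 : 0 < ε := lt_of_lt_of_le one_pos hε1
  -- cast of polynomial evaluation
  have hcast : ∀ q : ℚ, P.eval ((q:ℝ)) = ((𝔉.eval q : ℚ) : ℝ) := by
    intro q
    rw [hP, Polynomial.eval_map, show ((q:ℝ)) = algebraMap ℚ ℝ q from (eq_ratCast _ q).symm,
      Polynomial.eval₂_at_apply]
    exact eq_ratCast _ _
  have key : ∀ v : Fin 2 → ℤ,
      ((eval v F : ℤ) : ℚ) = 𝔉.eval (eval (fun i => ((v i : ℤ) : ℚ)) G) := fun v => by
    rw [← aux_eval_map F v, hcomp, aux_eval_aeval]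
  -- bound on q
  have gbound : ∀ q : ℚ, ∀ n : ℤ, (N:ℤ) ≤ n → n ≤ 2*N → (n:ℚ) = 𝔉.eval q →
      |(q:ℝ)| ≤ B' * ε := by
    intro q n hn1 hn2 hq
    have hnR : |(n:ℝ)| ≤ 2 * N := by
      have hn0 : (0:ℤ) ≤ n := le_trans (Int.natCast_nonneg N) hn1
      rw [abs_of_nonneg (by exact_mod_cast hn0 : (0:ℝ) ≤ (n:ℝ))]
      exact_mod_cast hn2
    have hPn : |P.eval ((q:ℝ))| = |(n:ℝ)| := by
      rw [hcast q, ← hq]; push_cast; ring_nf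
    by_cases hqB : |(q:ℝ)| ≤ B
    · calc |(q:ℝ)| ≤ B := hqB
        _ ≤ B * ε := le_mul_of_one_le_right (le_trans zero_le_one hB1) hε1
        _ ≤ B' * ε := mul_le_mul_of_nonneg_right (le_add_of_nonneg_right hrnn) (le_of_lt hε0)
    · push_neg at hqB
      have hlow := hBlow ((q:ℝ)) (le_of_lt hqB)
      rw [hPdeg] at hlow
      have h1 : a / 2 * |(q:ℝ)| ^ d ≤ 2 * N := by
        calc a / 2 * |(q:ℝ)| ^ d ≤ |P.eval ((q:ℝ))| := hlow
          _ = |(n:ℝ)| := hPn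
          _ ≤ 2 * N := hnR
      have h2 : |(q:ℝ)| ^ d ≤ 4 / a * N := by
        rw [div_mul_eq_mul_div, le_div_iff₀ hapos]
        nlinarith [pow_nonneg (abs_nonneg ((q:ℝ))) d]
      have h3 : |(q:ℝ)| ≤ (4 / a * N) ^ ((1:ℝ)/(d:ℝ)) := by
        have hq0 : (0:ℝ) ≤ |(q:ℝ)| := abs_nonneg _
        calc |(q:ℝ)| = (|(q:ℝ)| ^ (d:ℕ)) ^ ((1:ℝ)/(d:ℝ)) := by
              rw [← Real.rpow_natCast |(q:ℝ)| d, ← Real.rpow_mul hq0,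
                mul_one_div, div_self (ne_of_gt hd0), Real.rpow_one]
          _ ≤ (4 / a * N) ^ ((1:ℝ)/(d:ℝ)) :=
              Real.rpow_le_rpow (pow_nonneg hq0 d) h2 (by positivity)
      calc |(q:ℝ)| ≤ (4 / a * N) ^ ((1:ℝ)/(d:ℝ)) := h3
        _ = (4 / a) ^ ((1:ℝ)/(d:ℝ)) * ε := Real.mul_rpow (by positivity) (by positivity)
        _ ≤ B' * ε := mul_le_mul_of_nonneg_right
            (le_add_of_nonneg_left (le_trans zero_le_one hB1)) (le_of_lt hε0)
  -- the injection
  set A := {n : ℤ | (N : ℤ) ≤ n ∧ n ≤ 2 * N ∧ ∃ x y : ℤ, eval ![x, y] F = n} with hA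
  set φ : ℤ → ℤ := fun n =>
    if h : ∃ p : ℤ × ℤ, eval ![p.1, p.2] F = n then k ![h.choose.1, h.choose.2] else 0 with hφ
  have hφval : ∀ n ∈ A, ∃ q : ℚ, ((φ n : ℤ) : ℚ) = (D:ℚ) * q ∧ (n:ℚ) = 𝔉.eval q := by
    intro n hn
    obtain ⟨hn1, hn2, x, y, hxy⟩ := hn
    have hp : ∃ p : ℤ × ℤ, eval ![p.1, p.2] F = n := ⟨(x, y), hxy⟩
    refine ⟨eval (fun i => ((![hp.choose.1, hp.choose.2] i : ℤ) : ℚ)) G, ?_, ?_⟩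
    · rw [hφ]
      simp only [dif_pos hp]
      exact hk _
    · have hkey := key ![hp.choose.1, hp.choose.2]
      rw [hp.choose_spec] at hkey
      exact hkey
  set M := (D:ℝ) * B' * ε with hM
  have hM0 : 0 ≤ M := by positivity
  set K : ℤ := ⌊M⌋ with hK
  have hK0 : 0 ≤ K := Int.floor_nonneg.mpr hM0
  have hmem : ∀ n ∈ A, φ n ∈ (↑(Finset.Icc (-K) K) : Set ℤ) := by
    intro n hn
    obtain ⟨q, hq1, hq2⟩ := hφval n hn
    obtain ⟨hn1, hn2, -⟩ := hn
    have hqb := gbound q n hn1 hn2 hq2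
    have hφR : |((φ n : ℤ) : ℝ)| ≤ M := by
      have : ((φ n : ℤ) : ℝ) = (D:ℝ) * ((q:ℚ):ℝ) := by exact_mod_cast congrArg (Rat.cast (K := ℝ)) hq1
      rw [this, abs_mul, abs_of_nonneg (by positivity : (0:ℝ) ≤ (D:ℝ)), hM, mul_assoc]
      exact mul_le_mul_of_nonneg_left hqb (by positivity)
    rw [abs_le] at hφR
    simp only [Finset.coe_Icc, Set.mem_Icc]
    constructor
    · rw [neg_le]
      exact Int.le_floor.mpr (by push_cast; linarith [hφR.1])
    · exact Int.le_floor.mpr hφR.2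
  have hinj : Set.InjOn φ A := by
    intro n₁ hn₁ n₂ hn₂ heq
    obtain ⟨q₁, hq₁, hq₁'⟩ := hφval n₁ hn₁
    obtain ⟨q₂, hq₂, hq₂'⟩ := hφval n₂ hn₂
    have : (D:ℚ) * q₁ = (D:ℚ) * q₂ := by rw [← hq₁, ← hq₂, heq]
    have hq : q₁ = q₂ := mul_left_cancel₀ (by exact_mod_cast hDpos.ne' : (D:ℚ) ≠ 0) this
    have : (n₁ : ℚ) = (n₂ : ℚ) := by rw [hq₁', hq₂', hq]
    exact_mod_cast this
  have hle := Set.ncard_le_ncard_of_injOn φ hmem hinj (Finset.finite_toSet _)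
  rw [Set.ncard_coe_finset, Int.card_Icc] at hle
  have hcard : (((K + 1 - -K).toNat : ℕ) : ℝ) ≤ 2 * M + 1 := by
    have hnn : (0:ℤ) ≤ K + 1 - -K := by linarith
    rw [show (((K + 1 - -K).toNat : ℕ) : ℝ) = ((K + 1 - -K : ℤ) : ℝ) by
      exact_mod_cast congrArg (fun z : ℤ => (z : ℝ)) (Int.toNat_of_nonneg hnn)]
    have := Int.floor_le M
    push_cast
    push_cast at this
    linarith
  calc (Set.ncard A : ℝ) ≤ (((K + 1 - -K).toNat : ℕ) : ℝ) := by exact_mod_cast hle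
    _ ≤ 2 * M + 1 := hcard
    _ = 2 * D * B' * ε + 1 := by rw [hM]; ring
    _ ≤ 2 * D * B' * ε + 1 * ε := by nlinarith
    _ = (2 * D * B' + 1) * ε := by ring
end

section
/- Let F ∈ ℤ[x,y] be a polynomial of total degree 6 whose degree-6 homogeneous component F₆ is positive semi-definite (F₆(x,y) ≥ 0 for all real (x,y)) but not positive definite (F₆ vanishes at some real point (x,y) ≠ (0,0)), and suppose that F₆ and the degree-5 homogeneous component F₅ are coprime as polynomials (gcd(F₆, F₅) = 1 in ℚ[x,y]). Then inf_{(x,y) ∈ ℤ²} F(x,y) = −∞. -/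
open MvPolynomial Finset

variable {R : Type*} [CommRing R]

/-- evaluation of a bivariate polynomial at `(X, 1)`, giving a univariate polynomial. -/
noncomputable def Phi2 : MvPolynomial (Fin 2) R →ₐ[R] Polynomial R :=
  MvPolynomial.aeval ![Polynomial.X, 1]

/-- homogenization of a univariate polynomial to a bivariate form of degree `d`. -/
noncomputable def dh (d : ℕ) (p : Polynomial R) : MvPolynomial (Fin 2) R :=
  ∑ i ∈ Finset.range (d + 1),
    MvPolynomial.monomial (Finsupp.single 0 i + Finsupp.single 1 (d - i)) (p.coeff i)

lemma fin2_degree (d : Fin 2 →₀ ℕ) : d.degree = d 0 + d 1 := by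
  rw [Finsupp.degree_apply]
  rw [Finset.sum_subset (Finset.subset_univ d.support)
    (fun i _ hi => Finsupp.notMem_support_iff.mp hi)]
  exact Fin.sum_univ_two d

lemma fin2_rep (d : Fin 2 →₀ ℕ) : d = Finsupp.single 0 (d 0) + Finsupp.single 1 (d 1) := by
  ext i
  fin_cases i <;> simp [Finsupp.single_apply]

lemma eval_Phi2 (G : MvPolynomial (Fin 2) R) (t : R) :
    (Phi2 G).eval t = eval ![t, 1] G := by
  induction G using MvPolynomial.induction_on with
  | C a => simp [Phi2]
  | add p q hp hq => simp [map_add, hp, hq]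
  | mul_X p i hp =>
      rw [map_mul, Polynomial.eval_mul, hp, map_mul]
      congr 1
      fin_cases i <;> simp [Phi2]

lemma Phi2_monomial (d : Fin 2 →₀ ℕ) (c : R) :
    Phi2 (monomial d c) = Polynomial.C c * Polynomial.X ^ (d 0) := by
  rw [Phi2, aeval_monomial, Finsupp.prod_fintype _ _ (fun i => pow_zero _), Fin.prod_univ_two]
  simp [Polynomial.algebraMap_eq]
lemma isHomog_mem_support {G : MvPolynomial (Fin 2) R} {n : ℕ} (hG : G.IsHomogeneous n)
    {d : Fin 2 →₀ ℕ} (hd : d ∈ G.support) : d 0 + d 1 = n := by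
  have h := hG (mem_support_iff.mp hd)
  rw [← fin2_degree, Finsupp.degree_eq_weight_one]
  exact h

lemma dh_sum {ι : Type*} (d : ℕ) (s : Finset ι) (f : ι → Polynomial R) :
    dh d (∑ x ∈ s, f x) = ∑ x ∈ s, dh d (f x) := by
  unfold dh
  rw [Finset.sum_comm]
  exact Finset.sum_congr rfl fun i _ => by
    rw [Polynomial.finset_sum_coeff, map_sum]

lemma dh_poly_monomial {l d : ℕ} (hld : l ≤ d) (c : R) :
    dh d (Polynomial.monomial l c) =
      MvPolynomial.monomial (Finsupp.single 0 l + Finsupp.single 1 (d - l)) c := by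
  unfold dh
  rw [Finset.sum_eq_single l]
  · rw [Polynomial.coeff_monomial, if_pos rfl]
  · intro i _ hil
    rw [Polynomial.coeff_monomial, if_neg (fun h => hil h.symm), map_zero]
  · intro h
    exact absurd (Finset.mem_range.mpr (Nat.lt_succ_of_le hld)) h

lemma dh_C_mul_X_pow {i d : ℕ} (hid : i ≤ d) (c : R) :
    dh d (Polynomial.C c * Polynomial.X ^ i) =
      MvPolynomial.monomial (Finsupp.single 0 i + Finsupp.single 1 (d - i)) c := by
  rw [Polynomial.C_mul_X_pow_eq_monomial, dh_poly_monomial hid]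

lemma dh_Phi2 {G : MvPolynomial (Fin 2) R} {n : ℕ} (hG : G.IsHomogeneous n) :
    dh n (Phi2 G) = G := by
  nth_rewrite 1 [← support_sum_monomial_coeff G]
  rw [map_sum, dh_sum]
  conv_rhs => rw [← support_sum_monomial_coeff G]
  refine Finset.sum_congr rfl fun d hd => ?_
  have hdeg : d 0 + d 1 = n := isHomog_mem_support hG hd
  have h0 : d 0 ≤ n := by omega
  have h1 : d 1 = n - d 0 := by omega
  rw [Phi2_monomial, dh_C_mul_X_pow h0]
  congr 1
  conv_rhs => rw [fin2_rep d]
  rw [h1]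

lemma natDegree_Phi2_le {G : MvPolynomial (Fin 2) R} {n : ℕ} (hG : G.IsHomogeneous n) :
    (Phi2 G).natDegree ≤ n := by
  conv_lhs => rw [← support_sum_monomial_coeff G, map_sum]
  refine Polynomial.natDegree_sum_le_of_forall_le _ _ fun d hd => ?_
  rw [Phi2_monomial]
  refine le_trans (Polynomial.natDegree_C_mul_X_pow_le _ _) ?_
  have hdeg : d 0 + d 1 = n := isHomog_mem_support hG hd
  omega

lemma dh_mul {a b : Polynomial R} {da db : ℕ} (ha : a.natDegree ≤ da) (hb : b.natDegree ≤ db) :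
    dh (da + db) (a * b) = dh da a * dh db b := by
  have hA := a.as_sum_range' (da + 1) (Nat.lt_succ_of_le ha)
  have hB := b.as_sum_range' (db + 1) (Nat.lt_succ_of_le hb)
  calc dh (da + db) (a * b)
      = dh (da + db) (∑ i ∈ Finset.range (da + 1), ∑ j ∈ Finset.range (db + 1),
          Polynomial.monomial (i + j) (a.coeff i * b.coeff j)) := by
        conv_lhs => rw [hA, hB]
        rw [Finset.sum_mul_sum]
        simp_rw [Polynomial.monomial_mul_monomial]
    _ = ∑ i ∈ Finset.range (da + 1), ∑ j ∈ Finset.range (db + 1),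
          MvPolynomial.monomial
            (Finsupp.single 0 (i + j) + Finsupp.single 1 (da + db - (i + j)))
            (a.coeff i * b.coeff j) := by
        rw [dh_sum]
        refine Finset.sum_congr rfl fun i hi => ?_
        rw [dh_sum]
        refine Finset.sum_congr rfl fun j hj => ?_
        have hi' := Finset.mem_range.mp hi
        have hj' := Finset.mem_range.mp hj
        exact dh_poly_monomial (by omega) _
    _ = dh da a * dh db b := by
        unfold dh
        rw [Finset.sum_mul_sum]
        refine Finset.sum_congr rfl fun i hi => Finset.sum_congr rfl fun j hj => ?_
        have hi' := Finset.mem_range.mp hi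
        have hj' := Finset.mem_range.mp hj
        rw [MvPolynomial.monomial_mul]
        have hkey : (Finsupp.single (0 : Fin 2) (i + j) + Finsupp.single 1 (da + db - (i + j)))
            = Finsupp.single 0 i + Finsupp.single 1 (da - i)
              + (Finsupp.single 0 j + Finsupp.single 1 (db - j)) := by
          refine Finsupp.ext fun k => ?_
          fin_cases k <;> simp [Finsupp.single_apply] <;> omega
        rw [hkey]

lemma coeff_dh_single (d : ℕ) (p : Polynomial R) :
    MvPolynomial.coeff (Finsupp.single 0 d) (dh d p) = p.coeff d := by
  unfold dh
  rw [MvPolynomial.coeff_sum, Finset.sum_eq_single d]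
  · rw [Nat.sub_self, Finsupp.single_zero, add_zero, MvPolynomial.coeff_monomial, if_pos rfl]
  · intro i _ hid
    rw [MvPolynomial.coeff_monomial, if_neg]
    intro heq
    have h0 := DFunLike.congr_fun heq 0
    simp [Finsupp.single_apply] at h0
    exact hid h0
  · intro h
    exact absurd (Finset.mem_range.mpr (Nat.lt_succ_of_le le_rfl)) h
lemma Phi2_eq_zero_iff {G : MvPolynomial (Fin 2) R} {n : ℕ} (hG : G.IsHomogeneous n) :
    Phi2 G = 0 ↔ G = 0 := by
  constructor
  · intro h
    have := dh_Phi2 hG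
    rw [h] at this
    rw [← this]
    unfold dh
    simp
  · intro h; rw [h, map_zero]

/-- scaling a homogeneous polynomial. -/
lemma isHomog_eval_smul {G : MvPolynomial (Fin 2) R} {n : ℕ} (hG : G.IsHomogeneous n)
    (c : R) (v : Fin 2 → R) : eval (c • v) G = c ^ n * eval v G := by
  rw [eval_eq', eval_eq', Finset.mul_sum]
  refine Finset.sum_congr rfl fun d hd => ?_
  have hdeg : d 0 + d 1 = n := isHomog_mem_support hG hd
  rw [Fin.prod_univ_two, Fin.prod_univ_two]
  simp only [Pi.smul_apply, smul_eq_mul]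
  rw [mul_pow, mul_pow, ← hdeg, pow_add]
  ring

lemma eval_one_zero {G : MvPolynomial (Fin 2) R} {n : ℕ} (hG : G.IsHomogeneous n) :
    eval ![1, 0] G = MvPolynomial.coeff (Finsupp.single 0 n) G := by
  rw [eval_eq']
  rw [Finset.sum_eq_single (Finsupp.single 0 n)]
  · simp [Finsupp.single_apply]
  · intro d hd hne
    have hdeg : d 0 + d 1 = n := isHomog_mem_support hG hd
    have h1 : d 1 ≠ 0 := by
      intro h10
      apply hne
      rw [fin2_rep d, h10, Finsupp.single_zero, add_zero]
      congr 1
      omega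
    rw [Fin.prod_univ_two]
    simp [zero_pow h1]
  · intro h
    rw [MvPolynomial.notMem_support_iff.mp h, zero_mul]

lemma isHomogeneous_map {S : Type*} [CommRing S] (f : R →+* S) {G : MvPolynomial (Fin 2) R}
    {n : ℕ} (hG : G.IsHomogeneous n) : (MvPolynomial.map f G).IsHomogeneous n := by
  intro d hd
  apply hG
  intro h
  rw [MvPolynomial.coeff_map, h, map_zero] at hd
  exact hd rfl

lemma Phi2_map {S : Type*} [CommRing S] (f : R →+* S) (G : MvPolynomial (Fin 2) R) :
    Phi2 (MvPolynomial.map f G) = (Phi2 G).map f := by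
  have h : (Polynomial.mapRingHom f).comp (Phi2.toRingHom : MvPolynomial (Fin 2) R →+* Polynomial R)
      = (Phi2.toRingHom : MvPolynomial (Fin 2) S →+* Polynomial S).comp (MvPolynomial.map f) := by
    apply MvPolynomial.ringHom_ext
    · intro r
      simp [Phi2, Polynomial.algebraMap_eq]
    · intro i
      fin_cases i <;> simp [Phi2]
  exact (DFunLike.congr_fun h G).symm

section FieldLemmas

variable {K : Type*} [Field K]

lemma dh_dvd {G : MvPolynomial (Fin 2) K} {n : ℕ} (hG : G.IsHomogeneous n)
    {m : Polynomial K} (hm : m ≠ 0) (hdvd : m ∣ Phi2 G) :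
    dh m.natDegree m ∣ G := by
  obtain ⟨h, hGh⟩ := hdvd
  by_cases hz : Phi2 G = 0
  · rw [(Phi2_eq_zero_iff hG).mp hz]
    exact dvd_zero _
  · have hh : h ≠ 0 := fun hh0 => hz (by rw [hGh, hh0, mul_zero])
    have hdeg : m.natDegree + h.natDegree ≤ n := by
      rw [← Polynomial.natDegree_mul hm hh, ← hGh]
      exact natDegree_Phi2_le hG
    have hmn : m.natDegree ≤ n := by omega
    have hhn : h.natDegree ≤ n - m.natDegree := by omega
    have : G = dh m.natDegree m * dh (n - m.natDegree) h := by
      rw [← dh_mul le_rfl hhn]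
      have : m.natDegree + (n - m.natDegree) = n := by omega
      rw [this, ← hGh, dh_Phi2 hG]
    exact ⟨_, this⟩

lemma dh_totalDegree_pos {m : Polynomial K} (hm : m ≠ 0) (hd : 1 ≤ m.natDegree) :
    0 < (dh m.natDegree m).totalDegree := by
  have hc : MvPolynomial.coeff (Finsupp.single 0 m.natDegree) (dh m.natDegree m) ≠ 0 := by
    rw [coeff_dh_single]
    exact Polynomial.leadingCoeff_ne_zero.mpr hm
  have hmem : Finsupp.single (0 : Fin 2) m.natDegree ∈ (dh m.natDegree m).support :=
    mem_support_iff.mpr hc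
  have := MvPolynomial.le_totalDegree hmem
  rw [Finsupp.sum_single_index (by rfl)] at this
  omega

lemma X1_dvd_of_coeff_zero {G : MvPolynomial (Fin 2) K} {n : ℕ} (hG : G.IsHomogeneous n)
    (hn : 1 ≤ n) (h0 : MvPolynomial.coeff (Finsupp.single 0 n) G = 0) :
    (MvPolynomial.X 1 : MvPolynomial (Fin 2) K) ∣ G := by
  conv_rhs => rw [← support_sum_monomial_coeff G]
  refine Finset.dvd_sum fun d hd => ?_
  refine MvPolynomial.X_dvd_monomial.mpr (Or.inr ?_)
  intro h1
  have hdeg : d 0 + d 1 = n := isHomog_mem_support hG hd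
  have : d = Finsupp.single 0 n := by
    rw [fin2_rep d, h1, Finsupp.single_zero, add_zero]
    congr 1
    omega
  rw [this] at hd
  exact (mem_support_iff.mp hd) h0

end FieldLemmas
section CastLemmas

lemma cast_eval_int {S : Type*} [CommRing S] (f : ℤ →+* S) (v : Fin 2 → ℤ)
    (F : MvPolynomial (Fin 2) ℤ) :
    f (eval v F) = eval (fun i => f (v i)) (MvPolynomial.map f F) := by
  rw [eval_map]
  rw [show eval v F = eval₂ (RingHom.id ℤ) v F from by rw [eval₂_eq_eval_map]; simp]
  rw [eval₂_comp_left f (RingHom.id ℤ) v F]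
  congr 1

lemma top_component_ne_zero (F : MvPolynomial (Fin 2) ℤ) (hdeg : F.totalDegree = 6) :
    homogeneousComponent 6 F ≠ 0 := by
  have hF : F ≠ 0 := by
    intro h
    rw [h, totalDegree_zero] at hdeg
    exact absurd hdeg (by norm_num)
  have hne : F.support.Nonempty := Finset.nonempty_of_ne_empty (fun h => hF (MvPolynomial.support_eq_empty.mp h))
  obtain ⟨d, hd, hsup⟩ := Finset.exists_mem_eq_sup F.support hne (fun s => s.sum fun _ e => e)
  rw [MvPolynomial.totalDegree] at hdeg
  intro h0
  have hc : MvPolynomial.coeff d (homogeneousComponent 6 F) = MvPolynomial.coeff d F := by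
    rw [coeff_homogeneousComponent, if_pos]
    rw [Finsupp.degree, ← hdeg, hsup]
    rfl
  rw [h0, MvPolynomial.coeff_zero] at hc
  exact (mem_support_iff.mp hd) hc.symm

end CastLemmas
section CaseLine

lemma eval_sum_components (F : MvPolynomial (Fin 2) ℤ) (hdeg : F.totalDegree = 6)
    (v : Fin 2 → ℤ) :
    eval v F = ∑ j ∈ Finset.range 7, eval v (homogeneousComponent j F) := by
  conv_lhs => rw [← sum_homogeneousComponent F]
  rw [hdeg, map_sum]

lemma case_line_zero (F : MvPolynomial (Fin 2) ℤ) (hdeg : F.totalDegree = 6)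
    (he6 : eval ![1, 0] (homogeneousComponent 6 F) = 0)
    (he5 : eval ![1, 0] (homogeneousComponent 5 F) ≠ 0) :
    ∀ M : ℤ, ∃ x y : ℤ, eval ![x, y] F < M := by
  intro M
  obtain ⟨e, he⟩ : ∃ e : ℕ → ℤ, e = fun j => eval ![1, 0] (homogeneousComponent j F) :=
    ⟨_, rfl⟩
  have he6' : e 6 = 0 := by rw [he]; exact he6
  have he5' : e 5 ≠ 0 := by rw [he]; exact he5
  obtain ⟨ε, hε⟩ : ∃ ε : ℤ, ε = if 0 < e 5 then -1 else 1 := ⟨_, rfl⟩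
  obtain ⟨B, hB⟩ : ∃ B : ℤ, B = ∑ j ∈ Finset.range 5, |e j| := ⟨_, rfl⟩
  have hB0 : 0 ≤ B := hB ▸ Finset.sum_nonneg fun j _ => abs_nonneg _
  obtain ⟨n, hn⟩ : ∃ n : ℤ, n = B + |M| + 1 := ⟨_, rfl⟩
  have habsM : 0 ≤ |M| := abs_nonneg M
  have hMle : M ≤ |M| := le_abs_self M
  have hMge : -|M| ≤ M := neg_abs_le M
  have hn1 : 1 ≤ n := by omega
  refine ⟨ε * n, 0, ?_⟩
  have hvec : (![ε * n, 0] : Fin 2 → ℤ) = (ε * n) • ![1, 0] := by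
    funext i; fin_cases i <;> simp
  have heval : eval ![ε * n, 0] F = ∑ j ∈ Finset.range 7, (ε * n) ^ j * e j := by
    rw [eval_sum_components F hdeg, he]
    refine Finset.sum_congr rfl fun j _ => ?_
    rw [hvec, isHomog_eval_smul (homogeneousComponent_isHomogeneous j F)]
  have hε2 : ε ^ 2 = 1 := by rw [hε]; split <;> norm_num
  have hterm5 : (ε * n) ^ 5 * e 5 ≤ -(n ^ 5) := by
    have h5 : (ε * n) ^ 5 * e 5 = n ^ 5 * (ε * e 5) := by
      have hee : ε ^ 5 = ε := by
        calc ε ^ 5 = (ε ^ 2) ^ 2 * ε := by ring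
        _ = ε := by rw [hε2]; ring
      rw [mul_pow, hee]; ring
    rw [h5]
    have hεe : ε * e 5 ≤ -1 := by
      rcases lt_or_ge 0 (e 5) with h | h
      · rw [hε, if_pos h]; omega
      · have : e 5 < 0 := lt_of_le_of_ne h he5'
        rw [hε, if_neg (by omega)]; omega
    have hn5 : (0:ℤ) ≤ n ^ 5 := by positivity
    nlinarith
  have hterm6 : (ε * n) ^ 6 * e 6 = 0 := by rw [he6', mul_zero]
  have hlow : ∑ j ∈ Finset.range 5, (ε * n) ^ j * e j ≤ n ^ 4 * B := by
    rw [hB, Finset.mul_sum]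
    refine Finset.sum_le_sum fun j hj => ?_
    have hj4 : j ≤ 4 := by
      have := Finset.mem_range.mp hj; omega
    calc (ε * n) ^ j * e j ≤ |(ε * n) ^ j * e j| := le_abs_self _
      _ = |ε * n| ^ j * |e j| := by rw [abs_mul, abs_pow]
      _ = n ^ j * |e j| := by
          congr 2
          rw [abs_mul]
          have : |ε| = 1 := by rw [hε]; split <;> norm_num
          rw [this, one_mul, abs_of_pos (by omega)]
      _ ≤ n ^ 4 * |e j| := by
          have : n ^ j ≤ n ^ 4 := pow_le_pow_right₀ hn1 hj4
          exact mul_le_mul_of_nonneg_right this (abs_nonneg _)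
  have hfin : eval ![ε * n, 0] F ≤ n ^ 4 * B - n ^ 5 := by
    rw [heval, Finset.sum_range_succ, Finset.sum_range_succ, hterm6, add_zero]
    linarith [add_le_add hlow hterm5]
  refine lt_of_le_of_lt hfin ?_
  have hn4 : (1:ℤ) ≤ n ^ 4 := one_le_pow₀ hn1
  calc n ^ 4 * B - n ^ 5 = n ^ 4 * (B - n) := by ring
    _ ≤ 1 * (B - n) := by
        apply mul_le_mul_of_nonpos_right hn4
        omega
    _ < M := by omega

end CaseLine
section CaseReal

set_option maxHeartbeats 1000000 in
lemma case_real (F : MvPolynomial (Fin 2) ℤ) (hdeg : F.totalDegree = 6) (α : ℝ)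
    (hpsd : ∀ t : ℝ,
      0 ≤ (Phi2 (MvPolynomial.map (Int.castRingHom ℝ) (homogeneousComponent 6 F))).eval t)
    (hroot : (Phi2 (MvPolynomial.map (Int.castRingHom ℝ) (homogeneousComponent 6 F))).eval α = 0)
    (hc5 : (Phi2 (MvPolynomial.map (Int.castRingHom ℝ) (homogeneousComponent 5 F))).eval α ≠ 0) :
    ∀ M : ℤ, ∃ x y : ℤ, eval ![x, y] F < M := by
  intro M
  obtain ⟨f, hf⟩ : ∃ f : ℕ → Polynomial ℝ,
      f = fun j => Phi2 (MvPolynomial.map (Int.castRingHom ℝ) (homogeneousComponent j F)) :=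
    ⟨_, rfl⟩
  have hf6psd : ∀ t, 0 ≤ (f 6).eval t := by rw [hf]; exact hpsd
  have hf6root : (f 6).eval α = 0 := by rw [hf]; exact hroot
  have hc : (f 5).eval α ≠ 0 := by rw [hf]; exact hc5
  -- factor out (X - α)^2 from f 6
  obtain ⟨g1, hg1⟩ : (Polynomial.X - Polynomial.C α) ∣ f 6 := Polynomial.dvd_iff_isRoot.mpr hf6root
  have hderiv : (f 6).derivative.eval α = 0 := by
    have hmin : IsLocalMin (fun t => (f 6).eval t) α :=
      Filter.Eventually.of_forall fun t => by
        simpa only [hf6root] using hf6psd t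
    have := hmin.deriv_eq_zero
    rwa [Polynomial.deriv] at this
  have hg1root : g1.eval α = 0 := by
    rw [hg1, Polynomial.derivative_mul, Polynomial.derivative_sub, Polynomial.derivative_X, Polynomial.derivative_C, sub_zero] at hderiv
    simpa using hderiv
  obtain ⟨g2, hg2⟩ : (Polynomial.X - Polynomial.C α) ∣ g1 := Polynomial.dvd_iff_isRoot.mpr hg1root
  have hfact : f 6 = (Polynomial.X - Polynomial.C α) ^ 2 * g2 := by rw [hg1, hg2]; ring
  -- bounds on the compact interval
  obtain ⟨C2, hC2nn, hC2⟩ : ∃ C2 : ℝ, 0 ≤ C2 ∧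
      ∀ t ∈ Set.Icc (α - 1) (α + 1), |g2.eval t| ≤ C2 := by
    obtain ⟨C, hC⟩ := isCompact_Icc.exists_bound_of_continuousOn
      (f := fun t => g2.eval t) (g2.continuous.continuousOn)
    exact ⟨max C 0, le_max_right _ _, fun t ht =>
      le_trans (by simpa [Real.norm_eq_abs] using hC t ht) (le_max_left _ _)⟩
  obtain ⟨C1, hC1⟩ : ∃ C1 : ℝ,
      ∀ t ∈ Set.Icc (α - 1) (α + 1), ∑ j ∈ Finset.range 5, |(f j).eval t| ≤ C1 := by
    obtain ⟨C, hC⟩ := isCompact_Icc.exists_bound_of_continuousOn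
      (f := fun t => ∑ j ∈ Finset.range 5, |(f j).eval t|)
      (continuousOn_finset_sum _ fun j _ =>
        ((continuous_abs.comp (f j).continuous).continuousOn))
    refine ⟨C, fun t ht => ?_⟩
    have hnn : 0 ≤ ∑ j ∈ Finset.range 5, |(f j).eval t| :=
      Finset.sum_nonneg fun j _ => abs_nonneg _
    have := hC t ht
    rwa [Real.norm_eq_abs, abs_of_nonneg hnn] at this
  have hC1nn : 0 ≤ C1 := by
    refine le_trans (Finset.sum_nonneg fun j _ => abs_nonneg ((f j).eval α)) (hC1 α ?_)
    constructor <;> linarith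
  -- continuity of f 5 near α
  obtain ⟨δ, hδpos, hδ⟩ : ∃ δ > 0, ∀ t : ℝ, |t - α| < δ →
      |(f 5).eval t - (f 5).eval α| < |(f 5).eval α| / 2 := by
    have hcont := Metric.continuousAt_iff.mp ((f 5).continuous.continuousAt (x := α))
    obtain ⟨δ, hδpos, hδ⟩ := hcont (|(f 5).eval α| / 2) (by positivity)
    refine ⟨δ, hδpos, fun t ht => ?_⟩
    have h1 : dist t α < δ := by rwa [Real.dist_eq]
    have := hδ h1
    rwa [Real.dist_eq] at this
  obtain ⟨ε, hε⟩ : ∃ ε : ℤ, ε = if 0 < (f 5).eval α then -1 else 1 := ⟨_, rfl⟩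
  have hεabs : ((ε : ℝ)) = 1 ∨ ((ε : ℝ)) = -1 := by
    rw [hε]; split <;> norm_num
  have hε2 : ((ε : ℝ)) ^ 2 = 1 := by rcases hεabs with h | h <;> rw [h] <;> norm_num
  have hsign : ∀ t : ℝ, |t - α| < δ →
      (ε : ℝ) * (f 5).eval t ≤ -(|(f 5).eval α| / 2) := by
    intro t ht
    have habs := abs_lt.mp (hδ t ht)
    rcases lt_trichotomy ((f 5).eval α) 0 with hneg | hzero | hpos
    · rw [hε, if_neg (by linarith)]
      rw [abs_of_neg hneg] at habs ⊢
      push_cast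
      linarith
    · exact absurd hzero hc
    · rw [hε, if_pos hpos]
      rw [abs_of_pos hpos] at habs ⊢
      push_cast
      linarith
  -- choose a large natural number n
  obtain ⟨n, hn⟩ := exists_nat_gt (max (max (1 : ℝ) (1 / δ))
    ((C1 + C2 + |(M : ℝ)| + 1) * (2 / |(f 5).eval α|)))
  have hN1 : (1 : ℝ) ≤ (n : ℝ) :=
    le_of_lt (lt_of_le_of_lt ((le_max_left _ _).trans (le_max_left _ _)) hn)
  have hNpos : (0 : ℝ) < (n : ℝ) := lt_of_lt_of_le one_pos hN1
  have hNδ : 1 / δ < (n : ℝ) :=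
    lt_of_le_of_lt ((le_max_right _ _).trans (le_max_left _ _)) hn
  have hNc : (C1 + C2 + |(M : ℝ)| + 1) * (2 / |(f 5).eval α|) < (n : ℝ) :=
    lt_of_le_of_lt (le_max_right _ _) hn
  have hcpos : 0 < |(f 5).eval α| := abs_pos.mpr hc
  obtain ⟨p, hp⟩ : ∃ p : ℤ, p = round (α * n) := ⟨_, rfl⟩
  refine ⟨ε * p, ε * (n : ℤ), ?_⟩
  have hclose : |(p : ℝ) - α * n| ≤ 1 / 2 := by
    rw [hp, abs_sub_comm]
    push_cast
    exact abs_sub_round (α * n)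
  obtain ⟨t, ht⟩ : ∃ t : ℝ, t = (p : ℝ) / n := ⟨_, rfl⟩
  have hNne : (n : ℝ) ≠ 0 := ne_of_gt hNpos
  have htmul : (n : ℝ) * t = p := by rw [ht]; field_simp
  have htclose : |t - α| ≤ 1 / (2 * n) := by
    have hrw : t - α = ((p : ℝ) - α * n) / n := by rw [ht]; field_simp
    rw [hrw, abs_div, abs_of_pos hNpos]
    rw [div_le_div_iff₀ hNpos (by positivity)]
    calc |(p : ℝ) - α * n| * (2 * n) ≤ (1/2) * (2 * n) := by
          apply mul_le_mul_of_nonneg_right hclose (by positivity)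
      _ = 1 * n := by ring
  have htIcc : t ∈ Set.Icc (α - 1) (α + 1) := by
    have h1 : 1 / (2 * (n:ℝ)) ≤ 1 := by
      rw [div_le_one (by positivity)]; linarith
    have h2 := abs_le.mp (le_trans htclose h1)
    exact Set.mem_Icc.mpr ⟨by linarith [h2.1], by linarith [h2.2]⟩
  have htδ : |t - α| < δ := by
    have h1 : 1 < (n:ℝ) * δ := by
      have := (div_lt_iff₀ hδpos).mp hNδ
      linarith
    have h2 : 1 / (2 * (n:ℝ)) < δ := by
      rw [div_lt_iff₀ (by positivity)]
      nlinarith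
    exact lt_of_le_of_lt htclose h2
  -- evaluation identity
  have hvec : (fun i => (Int.castRingHom ℝ) ((![ε * p, ε * (n:ℤ)] : Fin 2 → ℤ) i))
      = (ε : ℝ) • ((n : ℝ) • ![t, 1]) := by
    funext i
    fin_cases i
    · show ((ε * p : ℤ) : ℝ) = (ε : ℝ) * ((n : ℝ) * t)
      rw [htmul]; push_cast; ring
    · show ((ε * (n:ℤ) : ℤ) : ℝ) = (ε : ℝ) * ((n : ℝ) * 1)
      push_cast; ring
  have hev : ((eval ![ε * p, ε * (n:ℤ)] F : ℤ) : ℝ)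
      = ∑ j ∈ Finset.range 7, (ε : ℝ) ^ j * ((n:ℝ) ^ j * (f j).eval t) := by
    have h0 : ((eval ![ε * p, ε * (n:ℤ)] F : ℤ) : ℝ)
        = eval (fun i => (Int.castRingHom ℝ) ((![ε * p, ε * (n:ℤ)] : Fin 2 → ℤ) i))
            (MvPolynomial.map (Int.castRingHom ℝ) F) :=
      cast_eval_int (Int.castRingHom ℝ) ![ε * p, ε * (n:ℤ)] F
    rw [h0, hvec]
    have hFsum : MvPolynomial.map (Int.castRingHom ℝ) F
        = ∑ j ∈ Finset.range 7,
            MvPolynomial.map (Int.castRingHom ℝ) (homogeneousComponent j F) := by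
      conv_lhs => rw [← sum_homogeneousComponent F]
      rw [hdeg, map_sum]
    rw [hFsum, map_sum]
    refine Finset.sum_congr rfl fun j _ => ?_
    have hhom : (MvPolynomial.map (Int.castRingHom ℝ)
        (homogeneousComponent j F)).IsHomogeneous j :=
      isHomogeneous_map _ (homogeneousComponent_isHomogeneous j F)
    rw [isHomog_eval_smul hhom, isHomog_eval_smul hhom]
    simp only [hf]
    rw [eval_Phi2]
  -- the estimates
  have hsq : ((n:ℝ) * (t - α)) ^ 2 ≤ 1 := by
    have habsmul : |(n:ℝ) * (t - α)| ≤ 1 / 2 := by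
      rw [abs_mul, abs_of_pos hNpos]
      calc (n:ℝ) * |t - α| ≤ (n:ℝ) * (1 / (2 * n)) :=
            mul_le_mul_of_nonneg_left htclose hNpos.le
        _ = 1 / 2 := by field_simp
    have h2 := abs_le.mp habsmul
    nlinarith [h2.1, h2.2]
  have hg2t := hC2 t htIcc
  have hterm6 : (ε:ℝ) ^ 6 * ((n:ℝ) ^ 6 * (f 6).eval t) ≤ C2 * (n:ℝ) ^ 4 := by
    have hε6 : (ε:ℝ) ^ 6 = 1 := by rcases hεabs with h | h <;> rw [h] <;> norm_num
    rw [hε6, one_mul, hfact]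
    simp only [Polynomial.eval_mul, Polynomial.eval_pow, Polynomial.eval_sub,
      Polynomial.eval_X, Polynomial.eval_C]
    have h1 : ((n:ℝ) * (t - α)) ^ 2 * g2.eval t ≤ C2 := by
      have ha := (abs_le.mp hg2t).1
      have hb := (abs_le.mp hg2t).2
      nlinarith [sq_nonneg ((n:ℝ) * (t - α)), mul_nonneg (sub_nonneg.mpr hsq) hC2nn,
        mul_nonneg (sq_nonneg ((n:ℝ) * (t - α))) (sub_nonneg.mpr hb)]
    calc (n:ℝ) ^ 6 * ((t - α) ^ 2 * g2.eval t)
        = ((n:ℝ) * (t - α)) ^ 2 * g2.eval t * (n:ℝ) ^ 4 := by ring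
      _ ≤ C2 * (n:ℝ) ^ 4 := by
          apply mul_le_mul_of_nonneg_right h1 (by positivity)
  have hterm5 : (ε:ℝ) ^ 5 * ((n:ℝ) ^ 5 * (f 5).eval t)
      ≤ -(|(f 5).eval α| / 2) * (n:ℝ) ^ 5 := by
    have hε5 : (ε:ℝ) ^ 5 = (ε:ℝ) := by rcases hεabs with h | h <;> rw [h] <;> norm_num
    have hs := hsign t htδ
    calc (ε:ℝ) ^ 5 * ((n:ℝ) ^ 5 * (f 5).eval t)
        = (n:ℝ) ^ 5 * ((ε:ℝ) * (f 5).eval t) := by rw [hε5]; ring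
      _ ≤ (n:ℝ) ^ 5 * (-(|(f 5).eval α| / 2)) :=
          mul_le_mul_of_nonneg_left hs (by positivity)
      _ = -(|(f 5).eval α| / 2) * (n:ℝ) ^ 5 := by ring
  have hεab : |(ε:ℝ)| = 1 := by rcases hεabs with h | h <;> rw [h] <;> norm_num
  have hlow : ∑ j ∈ Finset.range 5, (ε:ℝ) ^ j * ((n:ℝ) ^ j * (f j).eval t)
      ≤ C1 * (n:ℝ) ^ 4 := by
    calc ∑ j ∈ Finset.range 5, (ε:ℝ) ^ j * ((n:ℝ) ^ j * (f j).eval t)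
        ≤ ∑ j ∈ Finset.range 5, (n:ℝ) ^ 4 * |(f j).eval t| := by
          refine Finset.sum_le_sum fun j hj => ?_
          have hj4 : j ≤ 4 := by have := Finset.mem_range.mp hj; omega
          calc (ε:ℝ) ^ j * ((n:ℝ) ^ j * (f j).eval t)
              ≤ |(ε:ℝ) ^ j * ((n:ℝ) ^ j * (f j).eval t)| := le_abs_self _
            _ = (n:ℝ) ^ j * |(f j).eval t| := by
                rw [abs_mul, abs_mul, abs_pow, hεab, one_pow, one_mul, abs_pow,
                  abs_of_pos hNpos]
            _ ≤ (n:ℝ) ^ 4 * |(f j).eval t| := by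
                apply mul_le_mul_of_nonneg_right (pow_le_pow_right₀ hN1 hj4) (abs_nonneg _)
      _ = (n:ℝ) ^ 4 * ∑ j ∈ Finset.range 5, |(f j).eval t| := by rw [Finset.mul_sum]
      _ ≤ (n:ℝ) ^ 4 * C1 := by
          apply mul_le_mul_of_nonneg_left (hC1 t htIcc) (by positivity)
      _ = C1 * (n:ℝ) ^ 4 := by ring
  -- put everything together
  have htotal : ((eval ![ε * p, ε * (n:ℤ)] F : ℤ) : ℝ)
      ≤ C1 * (n:ℝ) ^ 4 + C2 * (n:ℝ) ^ 4 - (|(f 5).eval α| / 2) * (n:ℝ) ^ 5 := by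
    rw [hev, Finset.sum_range_succ, Finset.sum_range_succ]
    refine le_trans (add_le_add (add_le_add hlow hterm5) hterm6) (le_of_eq (by ring))
  have hkey : C1 + C2 + |(M:ℝ)| + 1 < (n:ℝ) * (|(f 5).eval α| / 2) := by
    have h2 := mul_lt_mul_of_pos_right hNc (half_pos hcpos)
    have h3 : ((C1 + C2 + |(M:ℝ)| + 1) * (2 / |(f 5).eval α|)) * (|(f 5).eval α| / 2)
        = C1 + C2 + |(M:ℝ)| + 1 := by
      field_simp
    rw [h3] at h2
    exact h2
  have hfinal : C1 * (n:ℝ) ^ 4 + C2 * (n:ℝ) ^ 4 - (|(f 5).eval α| / 2) * (n:ℝ) ^ 5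
      < (M:ℝ) := by
    have hA : C1 + C2 - (n:ℝ) * (|(f 5).eval α| / 2) < -(|(M:ℝ)| + 1) := by linarith
    have hn4 : (1:ℝ) ≤ (n:ℝ) ^ 4 := one_le_pow₀ hN1
    have hAneg : C1 + C2 - (n:ℝ) * (|(f 5).eval α| / 2) ≤ 0 := by
      have : (0:ℝ) ≤ |(M:ℝ)| := abs_nonneg _
      linarith
    have hmul : (n:ℝ) ^ 4 * (C1 + C2 - (n:ℝ) * (|(f 5).eval α| / 2))
        ≤ 1 * (C1 + C2 - (n:ℝ) * (|(f 5).eval α| / 2)) :=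
      mul_le_mul_of_nonpos_right hn4 hAneg
    have hMlb : -(|(M:ℝ)| + 1) < (M:ℝ) := by
      have := neg_abs_le (M:ℝ); linarith
    calc C1 * (n:ℝ) ^ 4 + C2 * (n:ℝ) ^ 4 - (|(f 5).eval α| / 2) * (n:ℝ) ^ 5
        = (n:ℝ) ^ 4 * (C1 + C2 - (n:ℝ) * (|(f 5).eval α| / 2)) := by ring
      _ ≤ 1 * (C1 + C2 - (n:ℝ) * (|(f 5).eval α| / 2)) := hmul
      _ < (M:ℝ) := by linarith
  have := lt_of_le_of_lt htotal hfinal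
  exact_mod_cast this

end CaseReal
/-- The image of `F ∈ ℤ[x,y]` in `ℚ[x,y]`. -/
noncomputable def toQ (F : MvPolynomial (Fin 2) ℤ) : MvPolynomial (Fin 2) ℚ :=
  MvPolynomial.map (Int.castRingHom ℚ) F

/-- If `F ∈ ℤ[x,y]` has degree 6, its degree-6 homogeneous component `F₆` is positive
semi-definite but not positive definite over `ℝ`, and `gcd(F₆, F₅) = 1` in `ℚ[x,y]`
(no common nonconstant factor), then `inf_{(x,y) ∈ ℤ²} F(x,y) = -∞`. -/
theorem psd_not_def_coprime_inf_neg_infty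
    (F : MvPolynomial (Fin 2) ℤ) (hdeg : F.totalDegree = 6)
    (hpsd : ∀ x y : ℝ,
      0 ≤ eval ![x, y] (MvPolynomial.map (Int.castRingHom ℝ) (homogeneousComponent 6 F)))
    (hnotdef : ∃ x y : ℝ, (x, y) ≠ (0, 0) ∧
      eval ![x, y] (MvPolynomial.map (Int.castRingHom ℝ) (homogeneousComponent 6 F)) = 0)
    (hgcd : ∀ g : MvPolynomial (Fin 2) ℚ, 0 < g.totalDegree →
      ¬ (g ∣ toQ (homogeneousComponent 6 F) ∧ g ∣ toQ (homogeneousComponent 5 F))) :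
    ∀ M : ℤ, ∃ x y : ℤ, eval ![x, y] F < M := by
  obtain ⟨a, b, hab, hzero⟩ := hnotdef
  have h6homR : (MvPolynomial.map (Int.castRingHom ℝ)
      (homogeneousComponent 6 F)).IsHomogeneous 6 :=
    isHomogeneous_map _ (homogeneousComponent_isHomogeneous 6 F)
  have h5homR : (MvPolynomial.map (Int.castRingHom ℝ)
      (homogeneousComponent 5 F)).IsHomogeneous 5 :=
    isHomogeneous_map _ (homogeneousComponent_isHomogeneous 5 F)
  have h6homQ : (toQ (homogeneousComponent 6 F)).IsHomogeneous 6 :=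
    isHomogeneous_map _ (homogeneousComponent_isHomogeneous 6 F)
  have h5homQ : (toQ (homogeneousComponent 5 F)).IsHomogeneous 5 :=
    isHomogeneous_map _ (homogeneousComponent_isHomogeneous 5 F)
  -- relation between the real and rational polynomials
  have hcomp : Int.castRingHom ℝ = (Rat.castHom ℝ).comp (Int.castRingHom ℚ) :=
    RingHom.ext_int _ _
  have hmapQR : ∀ j, MvPolynomial.map (Int.castRingHom ℝ) (homogeneousComponent j F)
      = MvPolynomial.map (Rat.castHom ℝ) (toQ (homogeneousComponent j F)) := by
    intro j
    rw [toQ, hcomp, ← MvPolynomial.map_map]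
  have halg : algebraMap ℚ ℝ = Rat.castHom ℝ := Subsingleton.elim _ _
  by_cases hb : b = 0
  · -- the vanishing direction is (1, 0)
    subst hb
    have ha : a ≠ 0 := fun h0 => hab (by rw [h0])
    have hvec : (![a, (0:ℝ)]) = a • ![1, 0] := by
      funext i; fin_cases i <;> simp
    rw [hvec, isHomog_eval_smul h6homR] at hzero
    have h6r : eval ![(1:ℝ), 0]
        (MvPolynomial.map (Int.castRingHom ℝ) (homogeneousComponent 6 F)) = 0 := by
      rcases mul_eq_zero.mp hzero with h | h
      · exact absurd h (pow_ne_zero _ ha)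
      · exact h
    have hcastvec : (fun i => (Int.castRingHom ℝ) ((![1, 0] : Fin 2 → ℤ) i))
        = ![(1:ℝ), 0] := by
      funext i; fin_cases i <;> simp
    have he6 : eval ![1, 0] (homogeneousComponent 6 F) = 0 := by
      have hcast := cast_eval_int (Int.castRingHom ℝ) ![1, 0] (homogeneousComponent 6 F)
      rw [hcastvec, h6r] at hcast
      have hcast' : ((eval ![1, 0] (homogeneousComponent 6 F) : ℤ) : ℝ) = 0 := hcast
      exact_mod_cast hcast'
    have he5 : eval ![1, 0] (homogeneousComponent 5 F) ≠ 0 := by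
      intro h5
      refine hgcd (MvPolynomial.X 1) (by rw [MvPolynomial.totalDegree_X]; norm_num) ⟨?_, ?_⟩
      · refine X1_dvd_of_coeff_zero h6homQ (by norm_num) ?_
        rw [toQ, MvPolynomial.coeff_map, ← eval_one_zero (homogeneousComponent_isHomogeneous 6 F),
          he6, map_zero]
      · refine X1_dvd_of_coeff_zero h5homQ (by norm_num) ?_
        rw [toQ, MvPolynomial.coeff_map, ← eval_one_zero (homogeneousComponent_isHomogeneous 5 F),
          h5, map_zero]
    exact case_line_zero F hdeg he6 he5
  · -- the vanishing direction is (α, 1) with α = a / b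
    have hvec : (![a, b]) = b • ![a / b, 1] := by
      funext i
      fin_cases i
      · show a = b * (a / b)
        field_simp
      · show b = b * 1
        ring
    rw [hvec, isHomog_eval_smul h6homR] at hzero
    have hroot' : eval ![a / b, 1]
        (MvPolynomial.map (Int.castRingHom ℝ) (homogeneousComponent 6 F)) = 0 := by
      rcases mul_eq_zero.mp hzero with h | h
      · exact absurd h (pow_ne_zero _ hb)
      · exact h
    have hroot : (Phi2 (MvPolynomial.map (Int.castRingHom ℝ)
        (homogeneousComponent 6 F))).eval (a / b) = 0 := by
      rw [eval_Phi2]; exact hroot'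
    have hpsd' : ∀ t : ℝ, 0 ≤ (Phi2 (MvPolynomial.map (Int.castRingHom ℝ)
        (homogeneousComponent 6 F))).eval t := by
      intro t; rw [eval_Phi2]; exact hpsd t 1
    have hc5 : (Phi2 (MvPolynomial.map (Int.castRingHom ℝ)
        (homogeneousComponent 5 F))).eval (a / b) ≠ 0 := by
      intro h5
      -- the minimal polynomial of α divides both dehomogenizations
      have hPhi6R : Phi2 (MvPolynomial.map (Int.castRingHom ℝ) (homogeneousComponent 6 F))
          = (Phi2 (toQ (homogeneousComponent 6 F))).map (Rat.castHom ℝ) := by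
        rw [hmapQR 6, Phi2_map]
      have hPhi5R : Phi2 (MvPolynomial.map (Int.castRingHom ℝ) (homogeneousComponent 5 F))
          = (Phi2 (toQ (homogeneousComponent 5 F))).map (Rat.castHom ℝ) := by
        rw [hmapQR 5, Phi2_map]
      have haev6 : Polynomial.aeval (a / b) (Phi2 (toQ (homogeneousComponent 6 F))) = 0 := by
        rw [Polynomial.aeval_def, Polynomial.eval₂_eq_eval_map, halg, ← hPhi6R]
        exact hroot
      have haev5 : Polynomial.aeval (a / b) (Phi2 (toQ (homogeneousComponent 5 F))) = 0 := by
        rw [Polynomial.aeval_def, Polynomial.eval₂_eq_eval_map, halg, ← hPhi5R]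
        exact h5
      have hf6Qne : Phi2 (toQ (homogeneousComponent 6 F)) ≠ 0 := by
        intro hzero6
        have h1 : toQ (homogeneousComponent 6 F) = 0 := (Phi2_eq_zero_iff h6homQ).mp hzero6
        have h2 : homogeneousComponent 6 F = 0 := by
          have hinj : Function.Injective (Int.castRingHom ℚ) := Int.cast_injective
          exact MvPolynomial.map_injective _ hinj (by rw [map_zero, ← toQ, h1])
        exact top_component_ne_zero F hdeg h2
      have halgc : IsAlgebraic ℚ (a / b) := ⟨_, hf6Qne, haev6⟩
      have hint : IsIntegral ℚ (a / b) := halgc.isIntegral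
      have hm0 : minpoly ℚ (a / b) ≠ 0 := minpoly.ne_zero hint
      have hmdeg : 1 ≤ (minpoly ℚ (a / b)).natDegree := minpoly.natDegree_pos hint
      refine hgcd (dh (minpoly ℚ (a / b)).natDegree (minpoly ℚ (a / b)))
        (dh_totalDegree_pos hm0 hmdeg) ⟨?_, ?_⟩
      · exact dh_dvd h6homQ hm0 (minpoly.dvd ℚ (a / b) haev6)
      · exact dh_dvd h5homQ hm0 (minpoly.dvd ℚ (a / b) haev5)
    exact case_real F hdeg (a / b) hpsd' hroot hc5
end

section
/- Let b₁ and r be rational numbers such that the Weierstrass curve E_r : y² = x³ + b₁x + r²b₁² over ℚ is non-singular (its discriminant is non-zero). Then P = (0, r·b₁) is a point on E_r, and the triple of P under the elliptic curve group law is 3P = (64b₁²r⁶ + 8b₁r², 512b₁³r⁹ + 96b₁²r⁵ + 3b₁r). -/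
open WeierstrassCurve.Affine WeierstrassCurve.Affine.Point in
private lemma some_congr {F : Type*} [Field F] {W : WeierstrassCurve.Affine F}
    {x₁ y₁ x₂ y₂ : F} (hx : x₁ = x₂) (hy : y₁ = y₂) (h₁ : W.Nonsingular x₁ y₁)
    (h₂ : W.Nonsingular x₂ y₂) : some _ _ h₁ = some _ _ h₂ := by
  subst hx hy; rfl

/-- Let `b₁, r ∈ ℚ` be such that the Weierstrass curve `E_r : y² = x³ + b₁x + r²b₁²` is
non-singular (nonzero discriminant). Then `P = (0, r·b₁)` lies on `E_r` and, under the
elliptic curve group law,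
`3P = (64b₁²r⁶ + 8b₁r², 512b₁³r⁹ + 96b₁²r⁵ + 3b₁r)`. -/
theorem rouse_triple_point (b₁ r : ℚ)
    (W : WeierstrassCurve ℚ)
    (hW : W = { a₁ := 0, a₂ := 0, a₃ := 0, a₄ := b₁, a₆ := r ^ 2 * b₁ ^ 2 })
    (hΔ : W.Δ ≠ 0) :
    ∃ (hP : W.toAffine.Nonsingular 0 (r * b₁))
      (hQ : W.toAffine.Nonsingular (64 * b₁ ^ 2 * r ^ 6 + 8 * b₁ * r ^ 2)
        (512 * b₁ ^ 3 * r ^ 9 + 96 * b₁ ^ 2 * r ^ 5 + 3 * b₁ * r)),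
      (3 : ℤ) • WeierstrassCurve.Affine.Point.some _ _ hP
        = WeierstrassCurve.Affine.Point.some _ _ hQ := by
  subst hW
  set W : WeierstrassCurve ℚ :=
    { a₁ := 0, a₂ := 0, a₃ := 0, a₄ := b₁, a₆ := r ^ 2 * b₁ ^ 2 } with hWdef
  have hb : b₁ ≠ 0 := by
    rintro rfl
    apply hΔ
    simp [WeierstrassCurve.Δ, WeierstrassCurve.b₂, WeierstrassCurve.b₄,
      WeierstrassCurve.b₆, WeierstrassCurve.b₈, hWdef]
  have heqP : W.toAffine.Equation 0 (r * b₁) := by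
    rw [WeierstrassCurve.Affine.equation_iff]
    show (r * b₁) ^ 2 + 0 * 0 * (r * b₁) + 0 * (r * b₁)
        = 0 ^ 3 + 0 * 0 ^ 2 + b₁ * 0 + r ^ 2 * b₁ ^ 2
    ring
  have hP : W.toAffine.Nonsingular 0 (r * b₁) :=
    (WeierstrassCurve.Affine.equation_iff_nonsingular_of_Δ_ne_zero (W := W.toAffine) hΔ).mp heqP
  have hQ : W.toAffine.Nonsingular (64 * b₁ ^ 2 * r ^ 6 + 8 * b₁ * r ^ 2)
      (512 * b₁ ^ 3 * r ^ 9 + 96 * b₁ ^ 2 * r ^ 5 + 3 * b₁ * r) := by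
    apply (WeierstrassCurve.Affine.equation_iff_nonsingular_of_Δ_ne_zero (W := W.toAffine) hΔ).mp
    rw [WeierstrassCurve.Affine.equation_iff]
    show (512 * b₁ ^ 3 * r ^ 9 + 96 * b₁ ^ 2 * r ^ 5 + 3 * b₁ * r) ^ 2
        + 0 * (64 * b₁ ^ 2 * r ^ 6 + 8 * b₁ * r ^ 2)
          * (512 * b₁ ^ 3 * r ^ 9 + 96 * b₁ ^ 2 * r ^ 5 + 3 * b₁ * r)
        + 0 * (512 * b₁ ^ 3 * r ^ 9 + 96 * b₁ ^ 2 * r ^ 5 + 3 * b₁ * r)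
        = (64 * b₁ ^ 2 * r ^ 6 + 8 * b₁ * r ^ 2) ^ 3
          + 0 * (64 * b₁ ^ 2 * r ^ 6 + 8 * b₁ * r ^ 2) ^ 2
          + b₁ * (64 * b₁ ^ 2 * r ^ 6 + 8 * b₁ * r ^ 2) + r ^ 2 * b₁ ^ 2
    ring
  refine ⟨hP, hQ, ?_⟩
  have h3 : (3 : ℤ) • WeierstrassCurve.Affine.Point.some _ _ hP
      = WeierstrassCurve.Affine.Point.some _ _ hP
        + (WeierstrassCurve.Affine.Point.some _ _ hP + WeierstrassCurve.Affine.Point.some _ _ hP) := by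
    rw [show (3 : ℤ) = 1 + 2 by norm_num, add_zsmul, one_zsmul, two_zsmul]
  rw [h3]
  rcases eq_or_ne r 0 with hr | hr
  · subst hr
    have hy : (0 : ℚ) * b₁ = W.toAffine.negY 0 (0 * b₁) := by
      simp [WeierstrassCurve.Affine.negY, hWdef]
    rw [WeierstrassCurve.Affine.Point.add_of_Y_eq rfl hy, add_zero]
    exact some_congr (by ring) (by ring) hP hQ
  · have hrb : r * b₁ ≠ 0 := mul_ne_zero hr hb
    have hy : r * b₁ ≠ W.toAffine.negY 0 (r * b₁) := by
      simp only [WeierstrassCurve.Affine.negY]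
      intro h
      apply hrb
      have : (2 : ℚ) * (r * b₁) = 0 := by linarith [h]
      linarith [this]
    rw [WeierstrassCurve.Affine.Point.add_self_of_Y_ne hy]
    -- slope of doubling
    have hL1 : W.toAffine.slope 0 0 (r * b₁) (r * b₁) = 1 / (2 * r) := by
      rw [WeierstrassCurve.Affine.slope_of_Y_ne rfl hy]
      simp only [WeierstrassCurve.Affine.negY]
      show (3 * 0 ^ 2 + 2 * 0 * 0 + b₁ - 0 * (r * b₁)) / (r * b₁ - (-(r * b₁) - 0 * 0 - 0))
        = 1 / (2 * r)
      field_simp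
      ring
    have hx2 : W.toAffine.addX 0 0 (W.toAffine.slope 0 0 (r * b₁) (r * b₁))
        = 1 / (4 * r ^ 2) := by
      rw [hL1]
      show (1 / (2 * r)) ^ 2 + 0 * (1 / (2 * r)) - 0 - 0 - 0 = 1 / (4 * r ^ 2)
      field_simp
      ring
    have hy2 : W.toAffine.addY 0 0 (r * b₁) (W.toAffine.slope 0 0 (r * b₁) (r * b₁))
        = -1 / (8 * r ^ 3) - r * b₁ := by
      rw [WeierstrassCurve.Affine.addY, WeierstrassCurve.Affine.negAddY, hx2, hL1]
      show -(1 / (2 * r) * (1 / (4 * r ^ 2) - 0) + r * b₁) - 0 * (1 / (4 * r ^ 2)) - 0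
        = -1 / (8 * r ^ 3) - r * b₁
      field_simp
      ring
    have hxne : (0 : ℚ) ≠ W.toAffine.addX 0 0 (W.toAffine.slope 0 0 (r * b₁) (r * b₁)) := by
      rw [hx2]
      simp [hr]
    rw [WeierstrassCurve.Affine.Point.add_of_X_ne hxne]
    apply some_congr _ _ _ hQ
    · -- X coordinate
      rw [WeierstrassCurve.Affine.slope_of_X_ne hxne, hx2, hy2]
      show ((r * b₁ - (-1 / (8 * r ^ 3) - r * b₁)) / (0 - 1 / (4 * r ^ 2))) ^ 2
          + 0 * ((r * b₁ - (-1 / (8 * r ^ 3) - r * b₁)) / (0 - 1 / (4 * r ^ 2)))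
          - 0 - 0 - 1 / (4 * r ^ 2)
        = 64 * b₁ ^ 2 * r ^ 6 + 8 * b₁ * r ^ 2
      field_simp
      ring
    · -- Y coordinate
      rw [WeierstrassCurve.Affine.addY, WeierstrassCurve.Affine.negAddY,
        WeierstrassCurve.Affine.slope_of_X_ne hxne, hx2, hy2]
      show -(((r * b₁ - (-1 / (8 * r ^ 3) - r * b₁)) / (0 - 1 / (4 * r ^ 2)))
            * (W.toAffine.addX 0 (1 / (4 * r ^ 2))
                ((r * b₁ - (-1 / (8 * r ^ 3) - r * b₁)) / (0 - 1 / (4 * r ^ 2))) - 0) + r * b₁)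
          - 0 * (W.toAffine.addX 0 (1 / (4 * r ^ 2))
              ((r * b₁ - (-1 / (8 * r ^ 3) - r * b₁)) / (0 - 1 / (4 * r ^ 2)))) - 0
        = 512 * b₁ ^ 3 * r ^ 9 + 96 * b₁ ^ 2 * r ^ 5 + 3 * b₁ * r
      rw [WeierstrassCurve.Affine.addX]
      show -(((r * b₁ - (-1 / (8 * r ^ 3) - r * b₁)) / (0 - 1 / (4 * r ^ 2)))
            * (((r * b₁ - (-1 / (8 * r ^ 3) - r * b₁)) / (0 - 1 / (4 * r ^ 2))) ^ 2
              + 0 * ((r * b₁ - (-1 / (8 * r ^ 3) - r * b₁)) / (0 - 1 / (4 * r ^ 2)))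
              - 0 - 0 - 1 / (4 * r ^ 2) - 0) + r * b₁)
          - 0 * (((r * b₁ - (-1 / (8 * r ^ 3) - r * b₁)) / (0 - 1 / (4 * r ^ 2))) ^ 2
              + 0 * ((r * b₁ - (-1 / (8 * r ^ 3) - r * b₁)) / (0 - 1 / (4 * r ^ 2)))
              - 0 - 0 - 1 / (4 * r ^ 2)) - 0
        = 512 * b₁ ^ 3 * r ^ 9 + 96 * b₁ ^ 2 * r ^ 5 + 3 * b₁ * r
      field_simp
      ring
end

section
/- For all b₁ and r (as elements of any commutative ring, in particular as indeterminates over ℤ), the polynomial identity (512b₁³r⁹ + 96b₁²r⁵ + 3b₁r)² = (64b₁²r⁶ + 8b₁r²)³ + b₁·(64b₁²r⁶ + 8b₁r²) + r²b₁² holds. Consequently, for every non-zero integer b₁ there are infinitely many pairs of integers (x,y) with x > 0 satisfying y² − x³ − b₁x = r²b₁² for some integer r with x ≥ 64b₁²r⁶ + 8b₁r², so that |y² − x³ − b₁x| = O_{b₁}(x^{1/3}). -/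
/-!
`(rouseX b r, rouseY b r)` is a polynomial point on `y² = x³ + b x + r² b²`, so for `b ≠ 0` and
`r ∈ ℤ` it gives integer points with `y² - x³ - b x = b² r²`. Since `rouseX b r ≥ r⁶`, the
defect `b² r²` is at most `b² x^{1/3}`, and the `x`-coordinates are unbounded, so there are
infinitely many such points.
-/

def rouseX {R : Type*} [CommRing R] (b r : R) : R := 64 * b ^ 2 * r ^ 6 + 8 * b * r ^ 2

def rouseY {R : Type*} [CommRing R] (b r : R) : R :=
  512 * b ^ 3 * r ^ 9 + 96 * b ^ 2 * r ^ 5 + 3 * b * r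

theorem rouseY_sq {R : Type*} [CommRing R] (b r : R) :
    rouseY b r ^ 2 = rouseX b r ^ 3 + b * rouseX b r + r ^ 2 * b ^ 2 := by
  unfold rouseX rouseY
  ring

theorem rouse_defect {R : Type*} [CommRing R] (b r : R) :
    rouseY b r ^ 2 - rouseX b r ^ 3 - b * rouseX b r = r ^ 2 * b ^ 2 := by
  rw [rouseY_sq]
  ring

theorem pow_six_le_rouseX {b : ℤ} (hb : b ≠ 0) (r : ℤ) : r ^ 6 ≤ rouseX b r := by
  have hb2 : 1 ≤ b ^ 2 := by rw [← sq_abs]; exact one_le_pow₀ (Int.one_le_abs hb)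
  have hbr : |b| * r ^ 2 ≤ b ^ 2 * r ^ 6 := by
    rcases eq_or_ne r 0 with rfl | hr
    · simp
    have hr2 : 1 ≤ r ^ 2 := by rw [← sq_abs]; exact one_le_pow₀ (Int.one_le_abs hr)
    calc |b| * r ^ 2 = |b| * 1 * (r ^ 2 * 1) := by ring
      _ ≤ |b| * |b| * (r ^ 2 * (r ^ 2) ^ 2) := by
        gcongr
        · exact Int.one_le_abs hb
        · exact one_le_pow₀ hr2
      _ = b ^ 2 * r ^ 6 := by rw [abs_mul_abs_self]; ring
  have hneg : -(|b| * r ^ 2) ≤ b * r ^ 2 := by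
    rw [← neg_mul]
    exact mul_le_mul_of_nonneg_right (neg_abs_le b) (sq_nonneg r)
  have hr6 : r ^ 6 ≤ b ^ 2 * r ^ 6 := le_mul_of_one_le_left (by positivity) hb2
  -- `64 b² r⁶ + 8 b r² ≥ 64 b² r⁶ - 8 |b| r² ≥ 56 b² r⁶ ≥ r⁶`
  unfold rouseX
  linear_combination 8 * hneg + 8 * hbr + 56 * hr6 + 55 * (by positivity : (0 : ℤ) ≤ r ^ 6)

theorem rouseX_pos {b r : ℤ} (hb : b ≠ 0) (hr : r ≠ 0) : 0 < rouseX b r :=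
  ((by decide : Even 6).pow_pos hr).trans_le (pow_six_le_rouseX hb r)

theorem sq_le_rpow_one_third_of_pow_six_le {r x : ℝ} (h : r ^ 6 ≤ x) :
    r ^ 2 ≤ x ^ (1 / 3 : ℝ) :=
  calc r ^ 2 = ((r ^ 2) ^ 3) ^ ((3 : ℕ)⁻¹ : ℝ) :=
        (Real.pow_rpow_inv_natCast (by positivity) three_ne_zero).symm
    _ ≤ x ^ (1 / 3 : ℝ) := by
      rw [← pow_mul, one_div]
      exact_mod_cast Real.rpow_le_rpow (by positivity) h (by norm_num)

theorem abs_defect_le_mul_rpow_one_third {x y b r : ℤ}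
    (h : y ^ 2 - x ^ 3 - b * x = r ^ 2 * b ^ 2) (hx : r ^ 6 ≤ x) :
    |(y : ℝ) ^ 2 - (x : ℝ) ^ 3 - b * x| ≤ (b : ℝ) ^ 2 * (x : ℝ) ^ (1 / 3 : ℝ) := by
  have hR : (y : ℝ) ^ 2 - (x : ℝ) ^ 3 - b * x = (r : ℝ) ^ 2 * (b : ℝ) ^ 2 := by exact_mod_cast h
  have hxR : (r : ℝ) ^ 6 ≤ x := by exact_mod_cast hx
  rw [hR, abs_of_nonneg (by positivity), mul_comm]
  gcongr
  exact sq_le_rpow_one_third_of_pow_six_le hxR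

/-- The polynomial identity
`(512b₁³r⁹ + 96b₁²r⁵ + 3b₁r)² = (64b₁²r⁶ + 8b₁r²)³ + b₁(64b₁²r⁶ + 8b₁r²) + r²b₁²`
holds in every commutative ring; consequently, for every nonzero integer `b₁` there are
infinitely many pairs `(x, y) ∈ ℤ²` with `x > 0` satisfying
`y² - x³ - b₁x = r²b₁²` for some `r ∈ ℤ` with `x ≥ 64b₁²r⁶ + 8b₁r²`, and with
`|y² - x³ - b₁x| ≤ C·x^{1/3}` for a constant `C = C(b₁) > 0`. -/
theorem rouse_identity_and_infinitely_many_points :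
    (∀ (R : Type) [CommRing R] (b₁ r : R),
      (512 * b₁ ^ 3 * r ^ 9 + 96 * b₁ ^ 2 * r ^ 5 + 3 * b₁ * r) ^ 2
        = (64 * b₁ ^ 2 * r ^ 6 + 8 * b₁ * r ^ 2) ^ 3
          + b₁ * (64 * b₁ ^ 2 * r ^ 6 + 8 * b₁ * r ^ 2) + r ^ 2 * b₁ ^ 2)
    ∧ ∀ b₁ : ℤ, b₁ ≠ 0 → ∃ C : ℝ, 0 < C ∧
        {p : ℤ × ℤ | 0 < p.1
          ∧ (∃ r : ℤ, p.2 ^ 2 - p.1 ^ 3 - b₁ * p.1 = r ^ 2 * b₁ ^ 2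
              ∧ 64 * b₁ ^ 2 * r ^ 6 + 8 * b₁ * r ^ 2 ≤ p.1)
          ∧ (|p.2 ^ 2 - p.1 ^ 3 - b₁ * p.1| : ℝ)
              ≤ C * (p.1 : ℝ) ^ ((1 : ℝ) / 3)}.Infinite := by
  refine ⟨fun R _ b r => rouseY_sq b r, fun b hb => ⟨(b : ℝ) ^ 2, by positivity, ?_⟩⟩
  apply Set.Infinite.of_image Prod.fst
  apply Set.infinite_of_forall_exists_gt
  intro a
  set r := |a| + 1
  have hr : r ≠ 0 := by positivity
  refine ⟨rouseX b r, ⟨(rouseX b r, rouseY b r), ?_, rfl⟩, ?_⟩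
  · exact ⟨rouseX_pos hb hr, ⟨r, rouse_defect b r, le_rfl⟩,
      abs_defect_le_mul_rpow_one_third (rouse_defect b r) (pow_six_le_rouseX hb r)⟩
  · calc a < r := by linarith [le_abs_self a]
      _ ≤ r ^ 6 := le_self_pow₀ (by linarith [abs_nonneg a]) (by norm_num)
      _ ≤ rouseX b r := pow_six_le_rouseX hb r
end
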